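/- arXiv:2506.04125 — 5 statements merged into one kernel-verified Lean document; each statement's English description precedes it below -/
import Mathlib

section
/- Let x₀ ∈ ℂ, r > 0, and let χ be complex differentiable on an open set containing the closed disk {z : |z − x₀| ≤ r}. Assume χ(x₀) = 0, χ is not identically zero near x₀, and χ(z) ≠ 0 for all z with 0 < |z − x₀| ≤ r. Let m₀ ≥ 1 denote the order (algebraic multiplicity) of the zero of χ at x₀, i.e., the unique positive integer such that χ(z) = (z − x₀)^{m₀} g(z) with g analytic near x₀ and g(x₀) ≠ 0. Then for every q with 0 < q ≤ r, (1/(2πi)) ∮_{|z−x₀|=q} χ'(z)/χ(z) dz = m₀; that is, the winding number of the image under χ of the positively oriented circle of radius q centered at x₀, taken around 0, equals m₀. -/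
open Metric

/-- **The index of an analytic map at an isolated zero equals its algebraic
multiplicity (paper's Lemma 2.12).**
Let `χ` be complex differentiable on an open set containing the closed disk of
center `x₀` and radius `r > 0`, with `χ x₀ = 0` and `χ z ≠ 0` for
`0 < |z - x₀| ≤ r`.  Suppose `χ z = (z - x₀)^m₀ * g z` near `x₀` with `g`
analytic at `x₀`, `g x₀ ≠ 0`, and `m₀ ≥ 1` (so `m₀` is the order of the zero;
in particular `χ` is not identically zero near `x₀`).  Then for every
`0 < q ≤ r` the winding number of the image of the circle `|z - x₀| = q`
under `χ` around `0`, namely `(1/(2πi)) ∮_{|z-x₀|=q} χ'(z)/χ(z) dz`,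
equals `m₀`. -/
theorem winding_number_of_image_circle_eq_multiplicity
    (x₀ : ℂ) (r : ℝ) (hr : 0 < r) (χ : ℂ → ℂ)
    (U : Set ℂ) (hU : IsOpen U) (hUb : closedBall x₀ r ⊆ U)
    (hχ : DifferentiableOn ℂ χ U)
    (hx₀ : χ x₀ = 0)
    (hne : ∀ z : ℂ, 0 < ‖z - x₀‖ → ‖z - x₀‖ ≤ r → χ z ≠ 0)
    (m₀ : ℕ) (hm₀ : 1 ≤ m₀)
    (g : ℂ → ℂ) (hg : AnalyticAt ℂ g x₀) (hg0 : g x₀ ≠ 0)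
    (hfact : ∀ᶠ z in nhds x₀, χ z = (z - x₀) ^ m₀ * g z) :
    ∀ q : ℝ, 0 < q → q ≤ r →
      (2 * Real.pi * Complex.I)⁻¹ * (∮ z in C(x₀, q), deriv χ z / χ z)
        = (m₀ : ℂ) := by
  obtain ⟨k, rfl⟩ : ∃ k, m₀ = k + 1 := ⟨m₀ - 1, (Nat.succ_pred_eq_of_pos hm₀).symm⟩
  set h : ℂ → ℂ := fun z => if z = x₀ then g x₀ else χ z / (z - x₀) ^ (k + 1) with hh
  -- the factorization holds everywhere
  have hkey : ∀ w, χ w = (w - x₀) ^ (k + 1) * h w := by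
    intro w
    by_cases hw : w = x₀
    · subst hw; simp [hh, hx₀]
    · have hne' : (w - x₀) ^ (k + 1) ≠ 0 := pow_ne_zero _ (sub_ne_zero.mpr hw)
      simp only [hh, if_neg hw]
      field_simp
  -- h is differentiable at every point of U
  have hdiff : ∀ z ∈ U, DifferentiableAt ℂ h z := by
    intro z hz
    by_cases hzx : z = x₀
    · rw [hzx]
      have heq : h =ᶠ[nhds x₀] g := by
        filter_upwards [hfact] with w hw
        by_cases hwx : w = x₀
        · subst hwx; simp [hh]
        · have hne' : (w - x₀) ^ (k + 1) ≠ 0 := pow_ne_zero _ (sub_ne_zero.mpr hwx)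
          simp only [hh, if_neg hwx, hw]
          field_simp
      exact hg.differentiableAt.congr_of_eventuallyEq heq
    · have hd : DifferentiableAt ℂ (fun w => χ w / (w - x₀) ^ (k + 1)) z := by
        refine DifferentiableAt.div ?_ ?_ (pow_ne_zero _ (sub_ne_zero.mpr hzx))
        · exact hχ.differentiableAt (hU.mem_nhds hz)
        · exact (differentiableAt_id.sub_const _).pow _
      refine hd.congr_of_eventuallyEq ?_
      filter_upwards [isOpen_compl_singleton.mem_nhds
        (by simpa [Set.mem_compl_iff] using hzx : z ∈ ({x₀}ᶜ : Set ℂ))] with w hw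
      simp only [hh, if_neg (by simpa using hw : w ≠ x₀)]
  have hDOn : DifferentiableOn ℂ h U := fun z hz => (hdiff z hz).differentiableWithinAt
  have hanal : ∀ z ∈ U, AnalyticAt ℂ h z := fun z hz =>
    hDOn.analyticAt (hU.mem_nhds hz)
  have hOn : AnalyticOnNhd ℂ h U := fun z hz => hanal z hz
  have hdanal : AnalyticOnNhd ℂ (deriv h) U := hOn.deriv_of_isOpen hU
  -- h does not vanish on the closed ball
  have hhne : ∀ z ∈ closedBall x₀ r, h z ≠ 0 := by
    intro z hz
    by_cases hzx : z = x₀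
    · rw [hzx]; simpa [hh] using hg0
    · have h1 : 0 < ‖z - x₀‖ := by
        simpa using (norm_pos_iff.mpr (sub_ne_zero.mpr hzx))
      have h2 : ‖z - x₀‖ ≤ r := by
        simpa [Complex.dist_eq] using mem_closedBall.mp hz
      have hχz := hne z h1 h2
      simp only [hh, if_neg hzx]
      exact div_ne_zero hχz (pow_ne_zero _ (sub_ne_zero.mpr hzx))
  intro q hq hqr
  have hsub : closedBall x₀ q ⊆ closedBall x₀ r := closedBall_subset_closedBall hqr
  have hmemU : ∀ z ∈ closedBall x₀ q, z ∈ U := fun z hz => hUb (hsub hz)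
  -- logarithmic derivative identity on the circle
  have hEq : Set.EqOn (fun z => deriv χ z / χ z)
      (fun z => ((k : ℂ) + 1) * (z - x₀)⁻¹ + deriv h z / h z) (sphere x₀ q) := by
    intro z hz
    have hzcb : z ∈ closedBall x₀ q := sphere_subset_closedBall hz
    have hzx : z ≠ x₀ := by
      intro hzx
      subst hzx
      simp [mem_sphere, dist_self] at hz
      exact hq.ne hz
    have hz0 : z - x₀ ≠ 0 := sub_ne_zero.mpr hzx
    have hhz : h z ≠ 0 := hhne z (hsub hzcb)
    have hdz : DifferentiableAt ℂ h z := hdiff z (hmemU z hzcb)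
    have H1 : HasDerivAt (fun w : ℂ => (w - x₀) ^ (k + 1))
        (((k : ℂ) + 1) * (z - x₀) ^ k) z := by
      have := ((hasDerivAt_id z).sub_const x₀).fun_pow (k + 1)
      simpa [Nat.cast_add] using this
    have H : HasDerivAt χ
        ((((k : ℂ) + 1) * (z - x₀) ^ k) * h z + (z - x₀) ^ (k + 1) * deriv h z) z := by
      have hχeq : χ = fun w => (w - x₀) ^ (k + 1) * h w := funext hkey
      rw [hχeq]
      exact H1.mul hdz.hasDerivAt
    simp only
    rw [H.deriv, hkey z]
    field_simp
    ring
  have hint := circleIntegral.integral_congr hq.le hEq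
  -- integrability of both summands
  have hcont1 : ContinuousOn (fun z : ℂ => ((k : ℂ) + 1) * (z - x₀)⁻¹) (sphere x₀ q) := by
    refine ContinuousOn.mul continuousOn_const ?_
    refine ContinuousOn.inv₀ ((continuous_id.sub continuous_const).continuousOn) ?_
    intro z hz
    refine sub_ne_zero.mpr ?_
    intro hzx
    subst hzx
    simp [mem_sphere, dist_self] at hz
    exact hq.ne hz
  have hcont2 : ContinuousOn (fun z : ℂ => deriv h z / h z) (closedBall x₀ q) := by
    intro z hz
    have hzU := hmemU z hz
    have hdc : ContinuousAt (deriv h) z := (hdanal z hzU).continuousAt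
    have hc : ContinuousAt h z := (hdiff z hzU).continuousAt
    exact (hdc.div hc (hhne z (hsub hz))).continuousWithinAt
  have hi1 : CircleIntegrable (fun z : ℂ => ((k : ℂ) + 1) * (z - x₀)⁻¹) x₀ q :=
    hcont1.circleIntegrable hq.le
  have hi2 : CircleIntegrable (fun z : ℂ => deriv h z / h z) x₀ q :=
    (hcont2.mono sphere_subset_closedBall).circleIntegrable hq.le
  have hadd : (∮ z in C(x₀, q), (((k : ℂ) + 1) * (z - x₀)⁻¹ + deriv h z / h z))
      = (∮ z in C(x₀, q), ((k : ℂ) + 1) * (z - x₀)⁻¹)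
        + ∮ z in C(x₀, q), deriv h z / h z := by
    simp only [circleIntegral, smul_add, intervalIntegral.integral_add hi1.out hi2.out]
  rw [hint, hadd]
  -- the second integral vanishes by Cauchy's theorem
  have hzero : (∮ z in C(x₀, q), deriv h z / h z) = 0 := by
    refine Complex.circleIntegral_eq_zero_of_differentiable_on_off_countable hq.le
      (Set.countable_empty) hcont2 ?_
    rintro z ⟨hz, -⟩
    have hzU := hmemU z (ball_subset_closedBall hz)
    exact ((hdanal z hzU).differentiableAt).div (hdiff z hzU)
      (hhne z (hsub (ball_subset_closedBall hz)))
  rw [hzero, add_zero, circleIntegral.integral_const_mul,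
    circleIntegral.integral_sub_inv_of_mem_ball (mem_ball_self hq)]
  have h2pi : (2 * (Real.pi : ℂ) * Complex.I) ≠ 0 := Complex.two_pi_I_ne_zero
  push_cast
  field_simp
end

section
/- Let m ≥ 1, let φ : U → ℝ^m be of class C² on an open set U ⊆ ℝ^m, and let F : ℝ^m → ℝ^m be of class C¹. For x ∈ U, let A(x) be the m×m matrix with entries A(x)_{i,k} = ∂φ_k/∂x_i(x) and K_{i,j}(x) the (i,j) minor of A(x). Define g : U → ℝ^m by g_i(x) = Σ_{j=1}^{m} (−1)^{i+j} K_{i,j}(x) F_j(φ(x)). Then for every x ∈ U, Σ_{i=1}^{m} ∂g_i/∂x_i(x) = (Σ_{j=1}^{m} ∂F_j/∂p_j)(φ(x)) · det A(x); that is, the divergence of g equals the pullback of the divergence of F multiplied by the Jacobian determinant of φ: ∇·g = ((∇·F) ∘ φ) · det Dφ. -/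
/-- The determinant, as a continuous multilinear map in the rows. -/
noncomputable def detCML (m : ℕ) :
    ContinuousMultilinearMap ℝ (fun _ : Fin m => (Fin m → ℝ)) ℝ :=
  MultilinearMap.mkContinuous
    (Matrix.detRowAlternating (R := ℝ) (n := Fin m)).toMultilinearMap
    (Nat.factorial m) (by
      intro M
      have hdet : (Matrix.detRowAlternating (R := ℝ) (n := Fin m)).toMultilinearMap M
          = Matrix.det (Matrix.of M) := rfl
      rw [hdet, Matrix.det_apply]
      refine le_trans (norm_sum_le _ _) ?_
      have hterm : ∀ σ : Equiv.Perm (Fin m),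
          ‖Equiv.Perm.sign σ • ∏ i, Matrix.of M (σ i) i‖ ≤ ∏ i, ‖M i‖ := by
        intro σ
        have h1 : ‖Equiv.Perm.sign σ • ∏ i, Matrix.of M (σ i) i‖
            = ‖∏ i, M (σ i) i‖ := by
          rcases Int.units_eq_one_or (Equiv.Perm.sign σ) with h | h <;>
            simp [h, Units.smul_def, Matrix.of_apply]
        rw [h1]
        calc ‖∏ i, M (σ i) i‖ = ∏ i, ‖M (σ i) i‖ := norm_prod _ _
          _ ≤ ∏ i, ‖M (σ i)‖ :=
            Finset.prod_le_prod (fun i _ => norm_nonneg _)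
              (fun i _ => norm_le_pi_norm (M (σ i)) i)
          _ = ∏ i, ‖M i‖ := Equiv.prod_comp σ (fun i => ‖M i‖)
      calc ∑ σ : Equiv.Perm (Fin m), ‖Equiv.Perm.sign σ • ∏ i, Matrix.of M (σ i) i‖
          ≤ (Finset.univ : Finset (Equiv.Perm (Fin m))).card • (∏ i, ‖M i‖) :=
            Finset.sum_le_card_nsmul _ _ _ (fun σ _ => hterm σ)
        _ = (Nat.factorial m : ℝ) * ∏ i, ‖M i‖ := by
            rw [nsmul_eq_mul, Finset.card_univ, Fintype.card_perm, Fintype.card_fin]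
        _ ≤ (Nat.factorial m : ℝ) * ∏ i, ‖M i‖ := le_rfl)

@[simp] theorem detCML_apply (m : ℕ) (M : Fin m → Fin m → ℝ) :
    detCML m M = Matrix.det (Matrix.of M) := rfl

theorem cof_eq (n : ℕ) (N : Matrix (Fin (n+1)) (Fin (n+1)) ℝ) (i j : Fin (n+1)) :
    (-1:ℝ)^((i:ℕ)+(j:ℕ)) * (N.submatrix i.succAbove j.succAbove).det
      = detCML (n+1) (fun p => if p = i then Pi.single j 1 else N p) := by
  have h1 : detCML (n+1) (fun p => if p = i then Pi.single j 1 else N p)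
      = (N.updateRow i (Pi.single j 1)).det := by
    rw [detCML_apply]
    congr 1
    ext p q
    rw [Matrix.updateRow_apply, Matrix.of_apply]
    by_cases hp : p = i <;> simp [hp]
  rw [h1, ← Matrix.adjugate_apply, Matrix.adjugate_fin_succ_eq_det_submatrix]

set_option maxHeartbeats 2000000 in
/-- **Pullback of the divergence via cofactors (equations (eq:divThmStep2)–(eq:vecG)
in the proof of the paper's Theorem 3.13).**
Let `φ : ℝ^m → ℝ^m` (here `m = n+1 ≥ 1`) be `C²` on an open set `U` and
`F : ℝ^m → ℝ^m` be `C¹`.  For `y ∈ U` let `A y` be the matrix with entries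
`A y i k = ∂φ_k/∂x_i (y)` and `K i j y` its `(i,j)` minor.  Define
`g_i(y) = ∑ j, (-1)^(i+j) K_{i,j}(y) F_j(φ y)`.  Then for every `x ∈ U`,
`∑ i, ∂g_i/∂x_i (x) = (∑ j, ∂F_j/∂p_j)(φ x) * det (A x)`, i.e.
`∇·g = ((∇·F) ∘ φ) · det Dφ`. -/
theorem div_pullback_cofactor_identity
    (n : ℕ) (U : Set (Fin (n + 1) → ℝ)) (hU : IsOpen U)
    (φ : (Fin (n + 1) → ℝ) → (Fin (n + 1) → ℝ))
    (hφ : ContDiffOn ℝ 2 φ U)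
    (F : (Fin (n + 1) → ℝ) → (Fin (n + 1) → ℝ))
    (hF : ContDiff ℝ 1 F)
    (x : Fin (n + 1) → ℝ) (hx : x ∈ U) :
    ∑ i : Fin (n + 1),
      fderiv ℝ
        (fun y => ∑ j : Fin (n + 1), (-1 : ℝ) ^ ((i : ℕ) + (j : ℕ)) *
          ((Matrix.of fun a b => fderiv ℝ φ y (Pi.single a 1) b).submatrix
              i.succAbove j.succAbove).det * F (φ y) j)
        x (Pi.single i 1)
      = (∑ j : Fin (n + 1), fderiv ℝ F (φ x) (Pi.single j 1) j) *
          (Matrix.of fun a b => fderiv ℝ φ x (Pi.single a 1) b).det := by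
  -- basic differentiability facts
  have hφdiff : ∀ y ∈ U, HasFDerivAt φ (fderiv ℝ φ y) y := by
    intro y hy
    exact ((hφ.differentiableOn (by norm_num)).differentiableAt (hU.mem_nhds hy)).hasFDerivAt
  have hf'cd : ContDiffOn ℝ 1 (fderiv ℝ φ) U := by
    have h2 : (2 : WithTop ℕ∞) = 1 + 1 := by norm_num
    rw [h2] at hφ
    exact ((contDiffOn_succ_iff_fderiv_of_isOpen hU).mp hφ).2.2
  set S : (Fin (n+1) → ℝ) →L[ℝ] (Fin (n+1) → ℝ) →L[ℝ] (Fin (n+1) → ℝ) :=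
    fderiv ℝ (fderiv ℝ φ) x with hSdef
  have hS : HasFDerivAt (fderiv ℝ φ) S x :=
    ((hf'cd.differentiableOn one_ne_zero).differentiableAt (hU.mem_nhds hx)).hasFDerivAt
  have hsymm : ∀ v w, S v w = S w v := fun v w =>
    second_derivative_symmetric_of_eventually
      (Filter.eventually_of_mem (hU.mem_nhds hx) hφdiff) hS v w
  set M : Fin (n+1) → Fin (n+1) → ℝ := fun p => fderiv ℝ φ x (Pi.single p 1) with hMdef
  have hrow : ∀ p : Fin (n+1), HasFDerivAt (fun y => fderiv ℝ φ y (Pi.single p 1))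
      ((ContinuousLinearMap.apply ℝ (Fin (n+1) → ℝ) (Pi.single p 1)).comp S) x := by
    intro p
    have h := (ContinuousLinearMap.apply ℝ (Fin (n+1) → ℝ)
      (Pi.single p 1)).hasFDerivAt.comp x hS
    simpa [Function.comp_def] using h
  -- derivative of the cofactor entries
  have hDij : ∀ i j : Fin (n+1), HasFDerivAt
      (fun y => detCML (n+1)
        (fun p => if p = i then Pi.single j 1 else fderiv ℝ φ y (Pi.single p 1)))
      (∑ p, ((detCML (n+1)).toContinuousLinearMap
          (fun q => if q = i then Pi.single j 1 else M q) p).comp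
          (if p = i then 0 else
            (ContinuousLinearMap.apply ℝ (Fin (n+1) → ℝ) (Pi.single p 1)).comp S)) x := by
    intro i j
    refine HasFDerivAt.multilinear_comp (detCML (n+1))
      (g := fun p y => if p = i then Pi.single j 1 else fderiv ℝ φ y (Pi.single p 1))
      (g' := fun p => if p = i then 0 else
        (ContinuousLinearMap.apply ℝ (Fin (n+1) → ℝ) (Pi.single p 1)).comp S) ?_
    intro p
    by_cases hp : p = i
    · simp only [if_pos hp]
      exact hasFDerivAt_const _ _
    · simp only [if_neg hp]
      exact hrow p
  -- derivative of the pulled-back vector field components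
  have hFφ : ∀ j : Fin (n+1), HasFDerivAt (fun y => F (φ y) j)
      ((ContinuousLinearMap.proj j).comp
        ((fderiv ℝ F (φ x)).comp (fderiv ℝ φ x))) x := by
    intro j
    have hF1 : HasFDerivAt F (fderiv ℝ F (φ x)) (φ x) :=
      (hF.differentiable one_ne_zero (φ x)).hasFDerivAt
    have h2 := hF1.comp x (hφdiff x hx)
    have h3 := (ContinuousLinearMap.proj (R := ℝ) (φ := fun _ : Fin (n+1) => ℝ)
      j).hasFDerivAt.comp x h2
    simpa [Function.comp_def, ContinuousLinearMap.comp_assoc] using h3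
  -- product rule for each component of g
  have hG : ∀ i : Fin (n+1), HasFDerivAt
      (fun y => ∑ j : Fin (n+1), detCML (n+1)
        (fun p => if p = i then Pi.single j 1 else fderiv ℝ φ y (Pi.single p 1)) * F (φ y) j)
      (∑ j : Fin (n+1),
        (detCML (n+1) (fun q => if q = i then Pi.single j 1 else M q) •
          ((ContinuousLinearMap.proj j).comp ((fderiv ℝ F (φ x)).comp (fderiv ℝ φ x))) +
         F (φ x) j •
          (∑ p, ((detCML (n+1)).toContinuousLinearMap
            (fun q => if q = i then Pi.single j 1 else M q) p).comp
            (if p = i then 0 else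
              (ContinuousLinearMap.apply ℝ (Fin (n+1) → ℝ) (Pi.single p 1)).comp S)))) x := by
    intro i
    exact HasFDerivAt.fun_sum fun j _ => (hDij i j).mul (hFφ j)
  -- Piola identity: the cofactor rows are divergence free
  have piola : ∀ j : Fin (n+1), (∑ i, ∑ p, ((detCML (n+1)).toContinuousLinearMap
      (fun q => if q = i then Pi.single j 1 else M q) p)
      ((if p = i then (0 : (Fin (n+1) → ℝ) →L[ℝ] (Fin (n+1) → ℝ)) else
        (ContinuousLinearMap.apply ℝ (Fin (n+1) → ℝ) (Pi.single p 1)).comp S)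
        (Pi.single i 1))) = 0 := by
    intro j
    set h : Fin (n+1) → Fin (n+1) → ℝ := fun i p => if p = i then 0 else
      detCML (n+1) (Function.update (fun q => if q = i then Pi.single j 1 else M q) p
        (S (Pi.single i 1) (Pi.single p 1))) with hhdef
    have hkey : ∀ i p : Fin (n+1), ((detCML (n+1)).toContinuousLinearMap
        (fun q => if q = i then Pi.single j 1 else M q) p)
        ((if p = i then (0 : (Fin (n+1) → ℝ) →L[ℝ] (Fin (n+1) → ℝ)) else
          (ContinuousLinearMap.apply ℝ (Fin (n+1) → ℝ) (Pi.single p 1)).comp S)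
          (Pi.single i 1)) = h i p := by
      intro i p
      by_cases hpi : p = i
      · simp [hhdef, hpi]
        exact Matrix.det_eq_zero_of_row_eq_zero i fun r => by simp
      · simp [hhdef, hpi]
    have hanti : ∀ i p, h i p = - h p i := by
      intro i p
      by_cases hpi : p = i
      · subst hpi; simp [hhdef]
      · have hip : ¬ i = p := fun hh => hpi hh.symm
        simp only [hhdef, if_neg hpi, if_neg hip]
        have hswap : (fun q => (Function.update
            (fun q' => if q' = i then Pi.single j 1 else M q') p
            (S (Pi.single i 1) (Pi.single p 1))) (Equiv.swap i p q))
            = Function.update (fun q' => if q' = p then Pi.single j 1 else M q') i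
              (S (Pi.single p 1) (Pi.single i 1)) := by
          funext q
          rcases eq_or_ne q i with rfl | hqi
          · rw [Equiv.swap_apply_left, Function.update_self, Function.update_self,
              hsymm (Pi.single q 1) (Pi.single p 1)]
          rcases eq_or_ne q p with rfl | hqp
          · rw [Equiv.swap_apply_right, Function.update_of_ne hip,
              Function.update_of_ne hqi, if_pos rfl, if_pos rfl]
          · rw [Equiv.swap_apply_of_ne_of_ne hqi hqp, Function.update_of_ne hqp,
              Function.update_of_ne hqi, if_neg hqi, if_neg hqp]
        have hdet := Matrix.det_permute (Equiv.swap i p)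
          (Matrix.of (Function.update (fun q' => if q' = i then Pi.single j 1 else M q') p
            (S (Pi.single i 1) (Pi.single p 1))))
        rw [Equiv.Perm.sign_swap (fun hh => hip hh)] at hdet
        have h5 : Matrix.of (Function.update
            (fun q' => if q' = p then Pi.single j 1 else M q') i
            (S (Pi.single p 1) (Pi.single i 1)))
            = (Matrix.of (Function.update (fun q' => if q' = i then Pi.single j 1 else M q') p
              (S (Pi.single i 1) (Pi.single p 1)))).submatrix (Equiv.swap i p) id := by
          ext q r
          rw [Matrix.submatrix_apply, id_eq, Matrix.of_apply, Matrix.of_apply, ← hswap]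
        rw [detCML_apply, detCML_apply, h5, hdet]
        simp
    have hsum0 : (∑ i, ∑ p, h i p) = 0 := by
      have hsum : (∑ i, ∑ p, h i p) = - ∑ i, ∑ p, h i p := by
        conv_lhs => rw [Finset.sum_comm]
        calc ∑ p, ∑ i, h i p = ∑ p, ∑ i, -(h p i) := by
              refine Finset.sum_congr rfl fun p _ => Finset.sum_congr rfl fun i _ => ?_
              rw [hanti i p]
          _ = - ∑ p, ∑ i, h p i := by simp
      linarith
    calc (∑ i, ∑ p, ((detCML (n+1)).toContinuousLinearMap
        (fun q => if q = i then Pi.single j 1 else M q) p)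
        ((if p = i then (0 : (Fin (n+1) → ℝ) →L[ℝ] (Fin (n+1) → ℝ)) else
          (ContinuousLinearMap.apply ℝ (Fin (n+1) → ℝ) (Pi.single p 1)).comp S)
          (Pi.single i 1)))
        = ∑ i, ∑ p, h i p :=
          Finset.sum_congr rfl fun i _ => Finset.sum_congr rfl fun p _ => hkey i p
      _ = 0 := hsum0
  -- linearity expansion of the derivative of F
  have hlin : ∀ (v : Fin (n+1) → ℝ) (j : Fin (n+1)),
      fderiv ℝ F (φ x) v j = ∑ l, v l * fderiv ℝ F (φ x) (Pi.single l 1) j := by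
    intro v j
    have hv : (∑ l, v l • (Pi.single l 1 : Fin (n+1) → ℝ)) = v := by
      have h0 : ∀ l : Fin (n+1), v l • (Pi.single l 1 : Fin (n+1) → ℝ) = Pi.single l (v l) := by
        intro l; ext k; by_cases hk : k = l <;> simp [Pi.single_apply, hk]
      simp_rw [h0]; exact Finset.univ_sum_single v
    conv_lhs => rw [← hv]
    rw [map_sum]
    simp [Finset.sum_apply, smul_eq_mul]
  -- the cofactor values are adjugate entries
  have hadj : ∀ i j : Fin (n+1),
      detCML (n+1) (fun q => if q = i then Pi.single j 1 else M q)
        = Matrix.adjugate (Matrix.of M) j i := by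
    intro i j
    rw [detCML_apply, Matrix.adjugate_apply]
    congr 1
    ext p q
    rw [Matrix.updateRow_apply, Matrix.of_apply, Matrix.of_apply]
    by_cases hp : p = i <;> simp [hp]
  -- main algebraic computation
  have hmain : (∑ i, ∑ j, detCML (n+1) (fun q => if q = i then Pi.single j 1 else M q) *
        fderiv ℝ F (φ x) (fderiv ℝ φ x (Pi.single i 1)) j)
      = (∑ j, fderiv ℝ F (φ x) (Pi.single j 1) j) * Matrix.det (Matrix.of M) := by
    calc (∑ i, ∑ j, detCML (n+1) (fun q => if q = i then Pi.single j 1 else M q) *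
          fderiv ℝ F (φ x) (fderiv ℝ φ x (Pi.single i 1)) j)
        = ∑ j, ∑ l, (∑ i, Matrix.adjugate (Matrix.of M) j i * Matrix.of M i l) *
            fderiv ℝ F (φ x) (Pi.single l 1) j := by
          rw [Finset.sum_comm]
          refine Finset.sum_congr rfl fun j _ => ?_
          calc (∑ i, detCML (n+1) (fun q => if q = i then Pi.single j 1 else M q) *
                fderiv ℝ F (φ x) (fderiv ℝ φ x (Pi.single i 1)) j)
              = ∑ i, ∑ l, Matrix.adjugate (Matrix.of M) j i *
                  (Matrix.of M i l * fderiv ℝ F (φ x) (Pi.single l 1) j) := by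
                refine Finset.sum_congr rfl fun i _ => ?_
                rw [hadj i j, hlin (fderiv ℝ φ x (Pi.single i 1)) j, Finset.mul_sum]
                rfl
            _ = ∑ l, (∑ i, Matrix.adjugate (Matrix.of M) j i * Matrix.of M i l) *
                  fderiv ℝ F (φ x) (Pi.single l 1) j := by
                rw [Finset.sum_comm]
                refine Finset.sum_congr rfl fun l _ => ?_
                rw [Finset.sum_mul]
                exact Finset.sum_congr rfl fun i _ => by ring
      _ = ∑ j, ∑ l, (Matrix.det (Matrix.of M) * if j = l then 1 else 0) *
            fderiv ℝ F (φ x) (Pi.single l 1) j := by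
          refine Finset.sum_congr rfl fun j _ => Finset.sum_congr rfl fun l _ => ?_
          congr 1
          rw [← Matrix.mul_apply, Matrix.adjugate_mul]
          simp [Matrix.one_apply]
      _ = (∑ j, fderiv ℝ F (φ x) (Pi.single j 1) j) * Matrix.det (Matrix.of M) := by
          rw [Finset.sum_mul]
          refine Finset.sum_congr rfl fun j _ => ?_
          rw [Finset.sum_eq_single j]
          · simp [mul_comm]
          · intro l _ hl
            simp [Ne.symm hl]
          · intro hj; exact absurd (Finset.mem_univ j) hj
  -- rewrite the statement's functions via cofactor = adjugate entries
  have hfun : ∀ i : Fin (n+1),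
      (fun y => ∑ j : Fin (n + 1), (-1 : ℝ) ^ ((i : ℕ) + (j : ℕ)) *
          ((Matrix.of fun a b => fderiv ℝ φ y (Pi.single a 1) b).submatrix
              i.succAbove j.succAbove).det * F (φ y) j)
      = (fun y => ∑ j : Fin (n + 1), detCML (n+1)
          (fun p => if p = i then Pi.single j 1 else fderiv ℝ φ y (Pi.single p 1)) *
          F (φ y) j) := by
    intro i; funext y
    refine Finset.sum_congr rfl fun j _ => ?_
    rw [cof_eq n (Matrix.of fun a b => fderiv ℝ φ y (Pi.single a 1) b) i j]
    rfl
  have hLHS : ∀ i : Fin (n+1), fderiv ℝ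
      (fun y => ∑ j : Fin (n + 1), (-1 : ℝ) ^ ((i : ℕ) + (j : ℕ)) *
          ((Matrix.of fun a b => fderiv ℝ φ y (Pi.single a 1) b).submatrix
              i.succAbove j.succAbove).det * F (φ y) j) x (Pi.single i 1)
      = ∑ j, (detCML (n+1) (fun q => if q = i then Pi.single j 1 else M q) *
            fderiv ℝ F (φ x) (fderiv ℝ φ x (Pi.single i 1)) j
          + F (φ x) j * ∑ p, ((detCML (n+1)).toContinuousLinearMap
              (fun q => if q = i then Pi.single j 1 else M q) p)
              ((if p = i then (0 : (Fin (n+1) → ℝ) →L[ℝ] (Fin (n+1) → ℝ)) else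
                (ContinuousLinearMap.apply ℝ (Fin (n+1) → ℝ) (Pi.single p 1)).comp S)
                (Pi.single i 1))) := by
    intro i
    rw [hfun i, (hG i).fderiv]
    simp only [ContinuousLinearMap.coe_sum', Finset.sum_apply,
      ContinuousLinearMap.add_apply, ContinuousLinearMap.coe_smul', Pi.smul_apply,
      ContinuousLinearMap.comp_apply, ContinuousLinearMap.proj_apply, smul_eq_mul]
  calc (∑ i : Fin (n + 1), fderiv ℝ
      (fun y => ∑ j : Fin (n + 1), (-1 : ℝ) ^ ((i : ℕ) + (j : ℕ)) *
          ((Matrix.of fun a b => fderiv ℝ φ y (Pi.single a 1) b).submatrix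
              i.succAbove j.succAbove).det * F (φ y) j) x (Pi.single i 1))
      = ∑ i, ∑ j, (detCML (n+1) (fun q => if q = i then Pi.single j 1 else M q) *
            fderiv ℝ F (φ x) (fderiv ℝ φ x (Pi.single i 1)) j
          + F (φ x) j * ∑ p, ((detCML (n+1)).toContinuousLinearMap
              (fun q => if q = i then Pi.single j 1 else M q) p)
              ((if p = i then (0 : (Fin (n+1) → ℝ) →L[ℝ] (Fin (n+1) → ℝ)) else
                (ContinuousLinearMap.apply ℝ (Fin (n+1) → ℝ) (Pi.single p 1)).comp S)
                (Pi.single i 1))) :=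
        Finset.sum_congr rfl fun i _ => hLHS i
    _ = (∑ i, ∑ j, detCML (n+1) (fun q => if q = i then Pi.single j 1 else M q) *
            fderiv ℝ F (φ x) (fderiv ℝ φ x (Pi.single i 1)) j)
        + ∑ i, ∑ j, F (φ x) j * ∑ p, ((detCML (n+1)).toContinuousLinearMap
              (fun q => if q = i then Pi.single j 1 else M q) p)
              ((if p = i then (0 : (Fin (n+1) → ℝ) →L[ℝ] (Fin (n+1) → ℝ)) else
                (ContinuousLinearMap.apply ℝ (Fin (n+1) → ℝ) (Pi.single p 1)).comp S)
                (Pi.single i 1)) := by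
        rw [← Finset.sum_add_distrib]
        exact Finset.sum_congr rfl fun i _ => Finset.sum_add_distrib
    _ = (∑ j, fderiv ℝ F (φ x) (Pi.single j 1) j) * Matrix.det (Matrix.of M) + 0 := by
        rw [hmain]
        congr 1
        rw [Finset.sum_comm]
        refine Finset.sum_eq_zero fun j _ => ?_
        rw [← Finset.mul_sum, piola j, mul_zero]
    _ = (∑ j : Fin (n + 1), fderiv ℝ F (φ x) (Pi.single j 1) j) *
          (Matrix.of fun a b => fderiv ℝ φ x (Pi.single a 1) b).det := by
        rw [add_zero]
end

section
/- Divergence theorem for cycles: let m ≥ 1, let φ be a C² map from an open neighborhood of the closed unit cube [0,1]^m into ℝ^m (not assumed injective), and let F : ℝ^m → ℝ^m be of class C¹. For x in the domain, let A(x) be the m×m matrix with entries A(x)_{i,k} = ∂φ_k/∂x_i(x) and K_{i,j}(x) the (i,j) minor of A(x). Then ∫_{[0,1]^m} (Σ_{j=1}^{m} ∂F_j/∂p_j)(φ(x)) · det A(x) dx = Σ_{r=1}^{m} Σ_{s∈{0,1}} (−1)^{s+1} ∫_{[0,1]^{m−1}} Σ_{j=1}^{m} (−1)^{r+j} F_j(φ(ι_{r,s}(z)))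 · K_{r,j}(ι_{r,s}(z)) dz, where the left-hand side is the Lebesgue integral over the unit m-cube and on the right each inner integral is over the unit (m−1)-cube. -/
open MeasureTheory


section DetCM

/-- The determinant, as a continuous multilinear map in the rows. -/
noncomputable def detCM (m : ℕ) : ContinuousMultilinearMap ℝ (fun _ : Fin m => Fin m → ℝ) ℝ :=
  MultilinearMap.mkContinuous
    (Matrix.detRowAlternating : (Fin m → ℝ) [⋀^Fin m]→ₗ[ℝ] ℝ).toMultilinearMap
    (m.factorial : ℝ) (fun v => by
      have h0 : (Matrix.detRowAlternating : (Fin m → ℝ) [⋀^Fin m]→ₗ[ℝ] ℝ).toMultilinearMap v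
          = Matrix.det (Matrix.of v) := rfl
      rw [h0, Matrix.det_apply]
      calc ‖∑ σ : Equiv.Perm (Fin m), Equiv.Perm.sign σ • ∏ i, Matrix.of v (σ i) i‖
          ≤ ∑ σ : Equiv.Perm (Fin m), ‖Equiv.Perm.sign σ • ∏ i, Matrix.of v (σ i) i‖ :=
            norm_sum_le _ _
        _ ≤ ∑ _σ : Equiv.Perm (Fin m), ∏ i, ‖v i‖ := by
            refine Finset.sum_le_sum fun σ _ => ?_
            have h1 : ‖Equiv.Perm.sign σ • ∏ i, Matrix.of v (σ i) i‖
                = ‖∏ i, v (σ i) i‖ := by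
              rcases Int.units_eq_one_or (Equiv.Perm.sign σ) with h | h <;>
                simp [h, Units.smul_def]
            rw [h1, norm_prod]
            calc ∏ i, ‖v (σ i) i‖ ≤ ∏ i, ‖v (σ i)‖ :=
                  Finset.prod_le_prod (fun i _ => norm_nonneg _)
                    (fun i _ => norm_le_pi_norm (v (σ i)) i)
              _ = ∏ i, ‖v i‖ := Equiv.prod_comp σ fun i => ‖v i‖
        _ = (m.factorial : ℝ) * ∏ i, ‖v i‖ := by
            rw [Finset.sum_const, Finset.card_univ, Fintype.card_perm, Fintype.card_fin,
              nsmul_eq_mul])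

lemma detCM_apply {m : ℕ} (v : Fin m → Fin m → ℝ) : detCM m v = Matrix.det (Matrix.of v) := rfl

end DetCM

section Key

variable {n : ℕ}

/-- rows of the matrix defining the adjugate entry `adj j i` at the point with derivative data. -/
noncomputable def adjRows (φ : (Fin (n + 1) → ℝ) → (Fin (n + 1) → ℝ)) (i j : Fin (n + 1))
    (y : Fin (n + 1) → ℝ) : Fin (n + 1) → (Fin (n + 1) → ℝ) :=
  fun p => if p = i then Pi.single j 1 else fderiv ℝ φ y (Pi.single p 1)

lemma adj_eq_detCM (φ : (Fin (n + 1) → ℝ) → (Fin (n + 1) → ℝ)) (i j : Fin (n + 1))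
    (y : Fin (n + 1) → ℝ) :
    (Matrix.of fun a b => fderiv ℝ φ y (Pi.single a 1) b).adjugate j i
      = detCM (n + 1) (adjRows φ i j y) := by
  rw [Matrix.adjugate_apply, detCM_apply]
  congr 1
  ext p q
  rw [Matrix.updateRow_apply]
  by_cases hp : p = i <;> simp [adjRows, hp, Matrix.of_apply]

theorem key (U : Set (Fin (n + 1) → ℝ)) (hU : IsOpen U)
    (φ : (Fin (n + 1) → ℝ) → (Fin (n + 1) → ℝ)) (hφ : ContDiffOn ℝ 2 φ U)
    (F : (Fin (n + 1) → ℝ) → (Fin (n + 1) → ℝ)) (hF : ContDiff ℝ 1 F)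
    {x : Fin (n + 1) → ℝ} (hx : x ∈ U) :
    ∃ Φ : (Fin (n + 1) → ℝ) →L[ℝ] (Fin (n + 1) → ℝ),
      HasFDerivAt (fun y => (fun i => ∑ j,
          F (φ y) j * (Matrix.of fun a b => fderiv ℝ φ y (Pi.single a 1) b).adjugate j i)) Φ x ∧
      ∑ i, Φ (Pi.single i 1) i
        = (∑ j, fderiv ℝ F (φ x) (Pi.single j 1) j) *
            (Matrix.of fun a b => fderiv ℝ φ x (Pi.single a 1) b).det := by
  classical
  set D : (Fin (n+1) → ℝ) → (Fin (n+1) → ℝ) →L[ℝ] (Fin (n+1) → ℝ) := fderiv ℝ φ with hD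
  have hD1 : ContDiffOn ℝ 1 D U := hφ.fderiv_of_isOpen (m := 1) hU (by norm_num)
  have hDy : ∀ y ∈ U, HasFDerivAt φ (D y) y := fun y hy =>
    ((hφ.differentiableOn (by norm_num)).differentiableAt (hU.mem_nhds hy)).hasFDerivAt
  have hD'x : HasFDerivAt D (fderiv ℝ D x) x :=
    ((hD1.differentiableOn one_ne_zero).differentiableAt (hU.mem_nhds hx)).hasFDerivAt
  set D' : (Fin (n+1) → ℝ) →L[ℝ] (Fin (n+1) → ℝ) →L[ℝ] (Fin (n+1) → ℝ) := fderiv ℝ D x with hD'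
  have hsymm : ∀ v w : (Fin (n+1) → ℝ), D' v w = D' w v :=
    second_derivative_symmetric_of_eventually
      (Filter.eventually_of_mem (hU.mem_nhds hx) hDy) hD'x
  set A : Matrix (Fin (n + 1)) (Fin (n + 1)) ℝ :=
    Matrix.of fun a b => D x (Pi.single a 1) b with hA
  -- derivative of each row family
  set R' : Fin (n + 1) → Fin (n + 1) → ((Fin (n+1) → ℝ) →L[ℝ] (Fin (n+1) → ℝ)) := fun i p =>
    if p = i then 0 else (ContinuousLinearMap.apply ℝ (Fin (n+1) → ℝ) ((Pi.single p 1 : Fin (n+1) → ℝ))).comp D' with hR'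
  have hRows : ∀ i j p, HasFDerivAt (fun y => adjRows φ i j y p) (R' i p) x := by
    intro i j p
    by_cases hp : p = i
    · simpa [adjRows, hp, hR'] using hasFDerivAt_const (𝕜 := ℝ) (Pi.single j 1 : Fin (n+1) → ℝ) x
    · have h0 : HasFDerivAt (fun L : (Fin (n+1) → ℝ) →L[ℝ] (Fin (n+1) → ℝ) => L (Pi.single p 1))
          (ContinuousLinearMap.apply ℝ (Fin (n+1) → ℝ) ((Pi.single p 1 : Fin (n+1) → ℝ))) (D x) := by
        exact ContinuousLinearMap.hasFDerivAt
          (ContinuousLinearMap.apply ℝ (Fin (n+1) → ℝ) ((Pi.single p 1 : Fin (n+1) → ℝ)))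
      have h := h0.comp x hD'x
      simpa [adjRows, hp, hR', Function.comp] using h
  -- derivative of the adjugate entries
  set Ψ : Fin (n + 1) → Fin (n + 1) → ((Fin (n+1) → ℝ) →L[ℝ] ℝ) := fun i j =>
    ∑ p, ((detCM (n + 1)).toContinuousLinearMap (adjRows φ i j x) p).comp (R' i p) with hΨ
  have hadj : ∀ i j, HasFDerivAt
      (fun y => (Matrix.of fun a b => fderiv ℝ φ y (Pi.single a 1) b).adjugate j i)
      (Ψ i j) x := by
    intro i j
    have h := HasFDerivAt.multilinear_comp (detCM (n + 1)) (hRows i j)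
    have heq : (fun y => (Matrix.of fun a b => fderiv ℝ φ y (Pi.single a 1) b).adjugate j i)
        = fun y => detCM (n + 1) (fun p => adjRows φ i j y p) := by
      funext y; rw [adj_eq_detCM]
    rw [heq]
    exact h
  -- derivative of the scalar coefficients
  have hFd : HasFDerivAt F (fderiv ℝ F (φ x)) (φ x) :=
    ((hF.differentiable one_ne_zero) (φ x)).hasFDerivAt
  set c' : Fin (n + 1) → ((Fin (n+1) → ℝ) →L[ℝ] ℝ) := fun j =>
    (ContinuousLinearMap.proj j).comp ((fderiv ℝ F (φ x)).comp (D x)) with hc'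
  have hc : ∀ j, HasFDerivAt (fun y => F (φ y) j) (c' j) x := by
    intro j
    have h1 : HasFDerivAt (fun y => F (φ y)) ((fderiv ℝ F (φ x)).comp (D x)) x :=
      hFd.comp x (hDy x hx)
    exact ((ContinuousLinearMap.proj j).hasFDerivAt).comp x h1
  -- assemble the full derivative
  set Φi : Fin (n + 1) → ((Fin (n+1) → ℝ) →L[ℝ] ℝ) := fun i =>
    ∑ j, (F (φ x) j • Ψ i j + (A.adjugate j i) • c' j) with hΦi
  refine ⟨ContinuousLinearMap.pi Φi, ?_, ?_⟩
  · apply hasFDerivAt_pi.2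
    intro i
    apply HasFDerivAt.fun_sum
    intro j _
    exact (hc j).mul (hadj i j)
  · -- compute the divergence
    set G : Fin (n + 1) → Fin (n + 1) → ℝ :=
      fun k j => fderiv ℝ F (φ x) (Pi.single k 1) j with hG
    have hpoint : ∀ i, (ContinuousLinearMap.pi Φi) (Pi.single i 1) i = Φi i (Pi.single i 1) :=
      fun i => rfl
    have hexp : ∀ i, Φi i (Pi.single i 1)
        = ∑ j, (F (φ x) j * Ψ i j (Pi.single i 1)
            + A.adjugate j i * c' j (Pi.single i 1)) := by
      intro i
      rw [hΦi]
      rw [ContinuousLinearMap.sum_apply]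
      refine Finset.sum_congr rfl fun j _ => ?_
      rw [ContinuousLinearMap.add_apply, ContinuousLinearMap.smul_apply,
        ContinuousLinearMap.smul_apply, smul_eq_mul, smul_eq_mul]
    -- Part A : the genuine divergence term
    have hDi : ∀ i, D x (Pi.single i 1) = ∑ k, A i k • (Pi.single k 1 : Fin (n+1) → ℝ) := by
      intro i
      ext q
      have h1 : D x (Pi.single i 1) q = A i q := rfl
      rw [h1, Finset.sum_apply]
      simp [Pi.single_apply]
    have hc'e : ∀ j i, c' j (Pi.single i 1) = ∑ k, A i k * G k j := by
      intro j i
      have h1 : c' j (Pi.single i 1) = fderiv ℝ F (φ x) (D x (Pi.single i 1)) j := rfl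
      rw [h1, hDi i, map_sum, Finset.sum_apply]
      refine Finset.sum_congr rfl fun k _ => ?_
      rw [(fderiv ℝ F (φ x)).map_smul]
      simp [hG, smul_eq_mul]
    have hAdjA : ∀ j k, (∑ i, A.adjugate j i * A i k) = A.det * (if j = k then 1 else 0) := by
      intro j k
      have h2 : (A.adjugate * A) j k = (A.det • (1 : Matrix (Fin (n+1)) (Fin (n+1)) ℝ)) j k := by
        rw [Matrix.adjugate_mul]
      simpa [Matrix.mul_apply, Matrix.smul_apply, Matrix.one_apply, smul_eq_mul] using h2
    have hPartA : (∑ i, ∑ j, A.adjugate j i * c' j (Pi.single i 1))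
        = (∑ j, G j j) * A.det := by
      calc (∑ i, ∑ j, A.adjugate j i * c' j (Pi.single i 1))
          = ∑ i, ∑ j, ∑ k, A.adjugate j i * (A i k * G k j) := by
            refine Finset.sum_congr rfl fun i _ => Finset.sum_congr rfl fun j _ => ?_
            rw [hc'e, Finset.mul_sum]
        _ = ∑ j, ∑ k, ∑ i, A.adjugate j i * (A i k * G k j) := by
            rw [Finset.sum_comm]
            refine Finset.sum_congr rfl fun j _ => Finset.sum_comm
        _ = ∑ j, ∑ k, (∑ i, A.adjugate j i * A i k) * G k j := by
            refine Finset.sum_congr rfl fun j _ => Finset.sum_congr rfl fun k _ => ?_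
            rw [Finset.sum_mul]
            exact Finset.sum_congr rfl fun i _ => by ring
        _ = ∑ j, ∑ k, (if j = k then A.det * G k j else 0) := by
            refine Finset.sum_congr rfl fun j _ => Finset.sum_congr rfl fun k _ => ?_
            rw [hAdjA]
            by_cases h : j = k <;> simp [h]
        _ = ∑ j, A.det * G j j := by
            refine Finset.sum_congr rfl fun j _ => ?_
            rw [Finset.sum_ite_eq]
            simp
        _ = (∑ j, G j j) * A.det := by
            rw [Finset.sum_mul]
            exact Finset.sum_congr rfl fun j _ => by ring
    -- Part B : the Piola identity term
    set W : Fin (n + 1) → Fin (n + 1) → (Fin (n+1) → ℝ) := fun i p =>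
      if p = i then 0 else D' (Pi.single i 1) (Pi.single p 1) with hW
    set T : Fin (n + 1) → Fin (n + 1) → Fin (n + 1) → ℝ := fun j i p =>
      detCM (n + 1) (Function.update (adjRows φ i j x) p (W i p)) with hT
    have hΨe : ∀ i j, Ψ i j (Pi.single i 1) = ∑ p, T j i p := by
      intro i j
      rw [hΨ, ContinuousLinearMap.sum_apply]
      refine Finset.sum_congr rfl fun p _ => ?_
      rw [ContinuousLinearMap.comp_apply]
      have h1 : R' i p (Pi.single i 1) = W i p := by
        rw [hR', hW]
        by_cases hp : p = i
        · simp [hp]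
        · simp only [hp, if_false]
          rfl
      rw [h1]
      rfl
    have hT0 : ∀ j i, T j i i = 0 := by
      intro j i
      rw [hT]
      simp only [hW, if_pos rfl]
      rw [detCM_apply]
      refine Matrix.det_eq_zero_of_row_eq_zero i fun q => ?_
      simp [Function.update_self]
    have hTswap : ∀ j i p, i ≠ p → T j p i = - T j i p := by
      intro j i p hip
      have hswap : (Function.update (adjRows φ p j x) i (W p i))
          = fun r => (Function.update (adjRows φ i j x) p (W i p)) (Equiv.swap i p r) := by
        funext r
        by_cases hr : r = i
        · subst hr
          rw [Equiv.swap_apply_left, Function.update_self, Function.update_self]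
          rw [hW]
          simp only [if_neg hip, if_neg (Ne.symm hip)]
          exact (hsymm _ _).symm
        · by_cases hr' : r = p
          · subst hr'
            rw [Equiv.swap_apply_right, Function.update_of_ne (Ne.symm hip),
              Function.update_of_ne hip]
            simp [adjRows]
          · rw [Equiv.swap_apply_of_ne_of_ne hr hr', Function.update_of_ne hr,
              Function.update_of_ne hr']
            simp [adjRows, hr, hr']
      rw [hT]
      simp only []
      rw [hswap, detCM_apply, detCM_apply]
      have h2 : (Matrix.of fun r => (Function.update (adjRows φ i j x) p (W i p)) (Equiv.swap i p r))
          = (Matrix.of (Function.update (adjRows φ i j x) p (W i p))).submatrix (Equiv.swap i p) id := rfl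
      rw [h2, Matrix.det_permute, Equiv.Perm.sign_swap hip]
      simp
    have hPiola : ∀ j, (∑ i, ∑ p, T j i p) = 0 := by
      intro j
      have h1 : (∑ i, ∑ p, T j i p) = - (∑ i, ∑ p, T j i p) := by
        calc (∑ i, ∑ p, T j i p) = ∑ i, ∑ p, -T j p i := by
              refine Finset.sum_congr rfl fun i _ => Finset.sum_congr rfl fun p _ => ?_
              by_cases hip : i = p
              · subst hip; rw [hT0]; simp
              · rw [hTswap j p i (Ne.symm hip)]
          _ = - (∑ i, ∑ p, T j p i) := by
              simp only [← Finset.sum_neg_distrib]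
          _ = - (∑ p, ∑ i, T j p i) := by rw [Finset.sum_comm]
      linarith
    have hPartB : (∑ i, ∑ j, F (φ x) j * Ψ i j (Pi.single i 1)) = 0 := by
      rw [Finset.sum_comm]
      refine Finset.sum_eq_zero fun j _ => ?_
      rw [← Finset.mul_sum]
      have : (∑ i, Ψ i j (Pi.single i 1)) = 0 := by
        rw [Finset.sum_congr rfl fun i _ => hΨe i j]
        exact hPiola j
      rw [this, mul_zero]
    -- put everything together
    calc ∑ i, (ContinuousLinearMap.pi Φi) (Pi.single i 1) i
        = ∑ i, ∑ j, (F (φ x) j * Ψ i j (Pi.single i 1)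
            + A.adjugate j i * c' j (Pi.single i 1)) := by
          exact Finset.sum_congr rfl fun i _ => by rw [hpoint, hexp]
      _ = (∑ i, ∑ j, F (φ x) j * Ψ i j (Pi.single i 1))
          + (∑ i, ∑ j, A.adjugate j i * c' j (Pi.single i 1)) := by
          rw [← Finset.sum_add_distrib]
          exact Finset.sum_congr rfl fun i _ => by rw [← Finset.sum_add_distrib]
      _ = 0 + (∑ j, G j j) * A.det := by rw [hPartA, hPartB]
      _ = (∑ j, fderiv ℝ F (φ x) (Pi.single j 1) j) * A.det := by rw [zero_add]

end Key


/-- **Divergence theorem for (possibly self-intersecting) cycles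
(the paper's Theorem 3.13, written in face-sum form).**
Let `φ : ℝ^m → ℝ^m` (here `m = n+1 ≥ 1`) be `C²` on an open set `U` containing
the closed unit cube `[0,1]^m`, and let `F : ℝ^m → ℝ^m` be `C¹`.  With
`A y i k = ∂φ_k/∂x_i (y)` and `K i j y` the `(i,j)` minor of `A y`, the integral
of the pulled-back divergence `((∇·F) ∘ φ) · det A` over the unit cube equals
the sum over the `2m` faces (the face with `r`-th coordinate frozen at
`s ∈ {0,1}`, parametrized via `Fin.insertNth`) of the signed cofactor boundary
integrals — i.e. the oriented surface integral `∮_{φ(∂[0,1]^m)} F · n`. -/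
theorem divergence_theorem_for_cycles
    (n : ℕ) (U : Set (Fin (n + 1) → ℝ)) (hU : IsOpen U)
    (hcube : Set.Icc (0 : Fin (n + 1) → ℝ) 1 ⊆ U)
    (φ : (Fin (n + 1) → ℝ) → (Fin (n + 1) → ℝ))
    (hφ : ContDiffOn ℝ 2 φ U)
    (F : (Fin (n + 1) → ℝ) → (Fin (n + 1) → ℝ))
    (hF : ContDiff ℝ 1 F) :
    ∫ x in Set.Icc (0 : Fin (n + 1) → ℝ) 1,
        (∑ j : Fin (n + 1), fderiv ℝ F (φ x) (Pi.single j 1) j) *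
          (Matrix.of fun a b => fderiv ℝ φ x (Pi.single a 1) b).det
      = ∑ r : Fin (n + 1), ∑ s : Fin 2, (-1 : ℝ) ^ ((s : ℕ) + 1) *
          ∫ z in Set.Icc (0 : Fin n → ℝ) 1,
            ∑ j : Fin (n + 1), (-1 : ℝ) ^ ((r : ℕ) + (j : ℕ)) *
              F (φ (r.insertNth ((s : ℕ) : ℝ) z)) j *
              ((Matrix.of fun a b =>
                    fderiv ℝ φ (r.insertNth ((s : ℕ) : ℝ) z) (Pi.single a 1) b).submatrix
                  r.succAbove j.succAbove).det := by
  classical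
  set f : (Fin (n + 1) → ℝ) → (Fin (n + 1) → ℝ) := fun y => (fun i => ∑ j,
      F (φ y) j * (Matrix.of fun a b => fderiv ℝ φ y (Pi.single a 1) b).adjugate j i) with hf
  set f' : (Fin (n + 1) → ℝ) → (Fin (n + 1) → ℝ) →L[ℝ] (Fin (n + 1) → ℝ) :=
    fun y => fderiv ℝ f y with hf'
  have hD1 : ContDiffOn ℝ 1 (fderiv ℝ φ) U := hφ.fderiv_of_isOpen (m := 1) hU (by norm_num)
  -- the key pointwise facts
  have hkey : ∀ y ∈ U, HasFDerivAt f (f' y) y ∧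
      (∑ i, f' y (Pi.single i 1) i
        = (∑ j, fderiv ℝ F (φ y) (Pi.single j 1) j) *
            (Matrix.of fun a b => fderiv ℝ φ y (Pi.single a 1) b).det) := by
    intro y hy
    obtain ⟨Φ, hΦ, hdiv⟩ := key U hU φ hφ F hF hy
    have hfd : fderiv ℝ f y = Φ := hΦ.fderiv
    have hfd' : f' y = Φ := hfd
    refine ⟨?_, ?_⟩
    · rw [hfd']; exact hΦ
    · rw [hfd']; exact hdiv
  -- continuity of f on U
  have hcontf : ContinuousOn f U := by
    apply continuousOn_pi.2
    intro i
    apply continuousOn_finset_sum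
    intro j _
    apply ContinuousOn.mul
    · exact ((continuous_apply j).comp hF.continuous).comp_continuousOn hφ.continuousOn
    · have h1 : (fun y => (Matrix.of fun a b => fderiv ℝ φ y (Pi.single a 1) b).adjugate j i)
          = fun y => detCM (n + 1) (adjRows φ i j y) := funext fun y => adj_eq_detCM φ i j y
      rw [h1]
      apply (detCM (n + 1)).cont.comp_continuousOn
      apply continuousOn_pi.2
      intro p
      by_cases hp : p = i
      · simpa [adjRows, hp] using
          (continuousOn_const : ContinuousOn (fun _ => (Pi.single j 1 : Fin (n+1) → ℝ)) U)
      · have h2 : (fun y => adjRows φ i j y p) = fun y =>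
            (ContinuousLinearMap.apply ℝ (Fin (n+1) → ℝ)
              ((Pi.single p 1 : Fin (n+1) → ℝ))) (fderiv ℝ φ y) := by
          funext y; simp [adjRows, hp]
        rw [h2]
        exact (ContinuousLinearMap.apply ℝ (Fin (n+1) → ℝ)
          ((Pi.single p 1 : Fin (n+1) → ℝ))).continuous.comp_continuousOn hD1.continuousOn
  -- continuity of the divergence integrand on U
  have hcontInt : ContinuousOn (fun y =>
      (∑ j, fderiv ℝ F (φ y) (Pi.single j 1) j) *
        (Matrix.of fun a b => fderiv ℝ φ y (Pi.single a 1) b).det) U := by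
    apply ContinuousOn.mul
    · apply continuousOn_finset_sum
      intro j _
      have hfF : Continuous (fderiv ℝ F) := hF.continuous_fderiv one_ne_zero
      exact ((continuous_apply j).comp
        ((ContinuousLinearMap.apply ℝ (Fin (n+1) → ℝ)
          ((Pi.single j 1 : Fin (n+1) → ℝ))).continuous.comp hfF)).comp_continuousOn
          hφ.continuousOn
    · have h1 : (fun y => (Matrix.of fun a b => fderiv ℝ φ y (Pi.single a 1) b).det)
          = fun y => detCM (n + 1) (fun p => fderiv ℝ φ y (Pi.single p 1)) := by
        funext y; rw [detCM_apply]
      rw [h1]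
      apply (detCM (n + 1)).cont.comp_continuousOn
      apply continuousOn_pi.2
      intro p
      exact (ContinuousLinearMap.apply ℝ (Fin (n+1) → ℝ)
        ((Pi.single p 1 : Fin (n+1) → ℝ))).continuous.comp_continuousOn hD1.continuousOn
  have hle : (0 : Fin (n + 1) → ℝ) ≤ 1 := fun _ => zero_le_one
  have hInt : IntegrableOn (fun y => ∑ i, f' y (Pi.single i 1) i)
      (Set.Icc (0 : Fin (n + 1) → ℝ) 1) := by
    have h1 : IntegrableOn (fun y =>
        (∑ j, fderiv ℝ F (φ y) (Pi.single j 1) j) *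
          (Matrix.of fun a b => fderiv ℝ φ y (Pi.single a 1) b).det)
        (Set.Icc (0 : Fin (n + 1) → ℝ) 1) :=
      ContinuousOn.integrableOn_compact isCompact_Icc (hcontInt.mono hcube)
    exact IntegrableOn.congr_fun h1 (fun y hy => ((hkey y (hcube hy)).2).symm)
      measurableSet_Icc
  have main := MeasureTheory.integral_divergence_of_hasFDerivAt_off_countable
    (0 : Fin (n + 1) → ℝ) 1 hle f f' ∅ Set.countable_empty (hcontf.mono hcube)
    (fun y hy => by
      refine (hkey y (hcube ?_)).1
      have := hy.1
      rw [Set.mem_Icc]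
      refine ⟨fun i => (this i (Set.mem_univ i)).1.le, fun i => (this i (Set.mem_univ i)).2.le⟩)
    hInt
  calc ∫ x in Set.Icc (0 : Fin (n + 1) → ℝ) 1,
        (∑ j, fderiv ℝ F (φ x) (Pi.single j 1) j) *
          (Matrix.of fun a b => fderiv ℝ φ x (Pi.single a 1) b).det
      = ∫ x in Set.Icc (0 : Fin (n + 1) → ℝ) 1, ∑ i, f' x (Pi.single i 1) i := by
        refine setIntegral_congr_fun measurableSet_Icc fun y hy => ?_
        exact ((hkey y (hcube hy)).2).symm
    _ = ∑ i : Fin (n + 1),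
        ((∫ x in Set.Icc ((0 : Fin (n+1) → ℝ) ∘ i.succAbove) ((1 : Fin (n+1) → ℝ) ∘ i.succAbove),
            f (i.insertNth ((1 : Fin (n+1) → ℝ) i) x) i)
          - ∫ x in Set.Icc ((0 : Fin (n+1) → ℝ) ∘ i.succAbove) ((1 : Fin (n+1) → ℝ) ∘ i.succAbove),
            f (i.insertNth ((0 : Fin (n+1) → ℝ) i) x) i) := main
    _ = ∑ r : Fin (n + 1), ∑ s : Fin 2, (-1 : ℝ) ^ ((s : ℕ) + 1) *
          ∫ z in Set.Icc (0 : Fin n → ℝ) 1,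
            ∑ j : Fin (n + 1), (-1 : ℝ) ^ ((r : ℕ) + (j : ℕ)) *
              F (φ (r.insertNth ((s : ℕ) : ℝ) z)) j *
              ((Matrix.of fun a b =>
                    fderiv ℝ φ (r.insertNth ((s : ℕ) : ℝ) z) (Pi.single a 1) b).submatrix
                  r.succAbove j.succAbove).det := by
        refine Finset.sum_congr rfl fun r _ => ?_
        have hint : ∀ c : ℝ,
            (∫ x in Set.Icc ((0 : Fin (n+1) → ℝ) ∘ r.succAbove) ((1 : Fin (n+1) → ℝ) ∘ r.succAbove),
              f (r.insertNth c x) r)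
            = ∫ z in Set.Icc (0 : Fin n → ℝ) 1,
                ∑ j : Fin (n + 1), (-1 : ℝ) ^ ((r : ℕ) + (j : ℕ)) *
                  F (φ (r.insertNth c z)) j *
                  ((Matrix.of fun a b =>
                        fderiv ℝ φ (r.insertNth c z) (Pi.single a 1) b).submatrix
                      r.succAbove j.succAbove).det := by
          intro c
          have hset : Set.Icc ((0 : Fin (n+1) → ℝ) ∘ r.succAbove)
              ((1 : Fin (n+1) → ℝ) ∘ r.succAbove) = Set.Icc (0 : Fin n → ℝ) 1 := rfl
          rw [hset]
          refine setIntegral_congr_fun measurableSet_Icc fun z _ => ?_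
          show (∑ j, F (φ (r.insertNth c z)) j *
              (Matrix.of fun a b =>
                fderiv ℝ φ (r.insertNth c z) (Pi.single a 1) b).adjugate j r) = _
          refine Finset.sum_congr rfl fun j _ => ?_
          rw [Matrix.adjugate_fin_succ_eq_det_submatrix]
          ring
        rw [Fin.sum_univ_two]
        have h0 : (((0 : Fin 2) : ℕ) : ℝ) = (0 : Fin (n+1) → ℝ) r := by norm_num
        have h1 : (((1 : Fin 2) : ℕ) : ℝ) = (1 : Fin (n+1) → ℝ) r := by norm_num
        rw [h0, h1, hint ((0 : Fin (n+1) → ℝ) r), hint ((1 : Fin (n+1) → ℝ) r)]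
        norm_num
        ring
end

section
/- Reynolds transport theorem for cycles: let m ≥ 1, let φ : ℝ^m × ℝ → ℝ^m be of class C² (jointly in space and time), and let f : ℝ^m × ℝ → ℝ be of class C¹. For (x,t), let A(x,t) be the m×m matrix with entries A(x,t)_{i,k} = ∂φ_k/∂x_i(x,t) and K_{i,j}(x,t) the (i,j) minor of A(x,t). Then for every t, the function t ↦ ∫_{[0,1]^m} f(φ(x,t), t) · det A(x,t) dx is differentiable at t, with derivative ∫_{[0,1]^m} (∂f/∂t)(φ(x,t), t) · det A(x,t) dx + Σ_{r=1}^{m} Σ_{s∈{0,1}} (−1)^{s+1} ∫_{[0,1]^{m−1}} Σ_{j=1}^{m} (−1)^{r+j} f(φ(ι_{r,s}(z), t), t) · (∂φ_j/∂t)(ι_{r,s}(z), t) · K_{r,j}(ι_{r,s}(z), t) dz, where ∂f/∂t denotes the partial derivative of f in its explicit time argument. -/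
open MeasureTheory

section ReynoldsAux

open Finset Matrix

lemma hasDerivAt_det {m : ℕ} {M : ℝ → Matrix (Fin m) (Fin m) ℝ}
    {M' : Matrix (Fin m) (Fin m) ℝ} {τ : ℝ}
    (h : ∀ i j, HasDerivAt (fun s => M s i j) (M' i j) τ) :
    HasDerivAt (fun s => (M s).det)
      (∑ i, ((M τ).updateRow i (M' i)).det) τ := by
  have key : ∀ s : ℝ, (M s).det
      = ∑ σ : Equiv.Perm (Fin m), ((Equiv.Perm.sign σ : ℤ) : ℝ) * ∏ i, M s (σ i) i := by
    intro s
    simp [Matrix.det_apply, Units.smul_def, zsmul_eq_mul]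
  have H : ∀ σ : Equiv.Perm (Fin m),
      HasDerivAt (fun s => ∏ i, M s (σ i) i)
        (∑ i, (∏ j ∈ univ.erase i, M τ (σ j) j) * M' (σ i) i) τ := by
    intro σ
    simpa [smul_eq_mul] using
      (HasDerivAt.fun_finsetProd (u := univ) (f := fun i s => M s (σ i) i)
        (f' := fun i => M' (σ i) i) (fun i _ => h (σ i) i))
  have main : HasDerivAt (fun s => (M s).det)
      (∑ σ : Equiv.Perm (Fin m), ((Equiv.Perm.sign σ : ℤ) : ℝ) *
        ∑ i, (∏ j ∈ univ.erase i, M τ (σ j) j) * M' (σ i) i) τ := by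
    have := HasDerivAt.fun_sum (u := (univ : Finset (Equiv.Perm (Fin m))))
      (A := fun σ s => ((Equiv.Perm.sign σ : ℤ) : ℝ) * ∏ i, M s (σ i) i)
      (A' := fun σ => ((Equiv.Perm.sign σ : ℤ) : ℝ) *
        ∑ i, (∏ j ∈ univ.erase i, M τ (σ j) j) * M' (σ i) i)
      (fun σ _ => (H σ).const_mul _)
    refine HasDerivAt.congr_deriv ?_ rfl
    exact this.congr_of_eventuallyEq (Filter.Eventually.of_forall fun s => (key s))
  refine main.congr_deriv ?_
  -- identify the derivative values
  have key2 : ∀ i : Fin m, ((M τ).updateRow i (M' i)).det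
      = ∑ σ : Equiv.Perm (Fin m), ((Equiv.Perm.sign σ : ℤ) : ℝ) *
          ∏ j, (M τ).updateRow i (M' i) (σ j) j := by
    intro i
    simp [Matrix.det_apply, Units.smul_def, zsmul_eq_mul]
  rw [Finset.sum_congr rfl (fun i (_ : i ∈ univ) => key2 i), Finset.sum_comm]
  refine Finset.sum_congr rfl fun σ _ => ?_
  rw [Finset.mul_sum]
  refine Fintype.sum_equiv σ _ _ fun i => ?_
  congr 1
  rw [← Finset.mul_prod_erase univ _ (Finset.mem_univ i), Matrix.updateRow_self]
  rw [mul_comm]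
  congr 1
  refine Finset.prod_congr rfl fun j hj => ?_
  exact congrFun (Matrix.updateRow_ne (fun hc => (Finset.ne_of_mem_erase hj) (σ.injective hc))) j |>.symm

lemma det_updateRow_eq_sum_adjugate {m : ℕ} (A : Matrix (Fin m) (Fin m) ℝ) (i : Fin m)
    (u : Fin m → ℝ) :
    (A.updateRow i u).det = ∑ j, u j * A.adjugate j i := by
  have hu : u = ∑ j, u j • (Pi.single j (1:ℝ) : Fin m → ℝ) := by
    ext k
    simp [Pi.single_apply]
  calc (A.updateRow i u).det = Aᵀ.cramer u i := by
        rw [Matrix.cramer_apply, Matrix.updateCol_transpose, Matrix.det_transpose]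
    _ = ∑ j, u j * A.adjugate j i := by
        conv_lhs => rw [hu]
        rw [map_sum, Finset.sum_apply]
        refine Finset.sum_congr rfl fun j _ => ?_
        rw [_root_.map_smul, Pi.smul_apply, smul_eq_mul]
        rfl

lemma fderiv_fderiv_symm {E F : Type*} [NormedAddCommGroup E] [NormedSpace ℝ E]
    [NormedAddCommGroup F] [NormedSpace ℝ F] {φ : E → F} (hφ : ContDiff ℝ 2 φ) (p : E)
    (w w' : E) :
    fderiv ℝ (fun q => fderiv ℝ φ q w) p w' = fderiv ℝ (fun q => fderiv ℝ φ q w') p w := by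
  have hd : ∀ y, HasFDerivAt φ (fderiv ℝ φ y) y := fun y =>
    (hφ.differentiable two_ne_zero).differentiableAt.hasFDerivAt
  have hD : ContDiff ℝ 1 (fderiv ℝ φ) := hφ.fderiv_right (by norm_num)
  have h2 : HasFDerivAt (fderiv ℝ φ) (fderiv ℝ (fderiv ℝ φ) p) p :=
    (hD.differentiable one_ne_zero).differentiableAt.hasFDerivAt
  have key : ∀ v v' : E, fderiv ℝ (fun q => fderiv ℝ φ q v) p v'
      = fderiv ℝ (fderiv ℝ φ) p v' v := by
    intro v v'
    have hc := (ContinuousLinearMap.apply ℝ F v).hasFDerivAt.comp p h2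
    have hc' : HasFDerivAt (fun q => fderiv ℝ φ q v)
        ((ContinuousLinearMap.apply ℝ F v).comp (fderiv ℝ (fderiv ℝ φ) p)) p := hc
    rw [hc'.fderiv]
    rfl
  rw [key w w', key w' w]
  exact second_derivative_symmetric hd h2 w' w

lemma contDiff_det_comp {E : Type*} [NormedAddCommGroup E] [NormedSpace ℝ E] {k : ℕ∞} {m : ℕ}
    {M : E → Matrix (Fin m) (Fin m) ℝ} (h : ∀ i j, ContDiff ℝ k (fun x => M x i j)) :
    ContDiff ℝ k (fun x => (M x).det) := by
  have hid : (fun x => (M x).det)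
      = fun x => ∑ σ : Equiv.Perm (Fin m), ((Equiv.Perm.sign σ : ℤ) : ℝ) * ∏ i, M x (σ i) i := by
    funext x
    simp [Matrix.det_apply, Units.smul_def, zsmul_eq_mul]
  rw [hid]
  exact ContDiff.sum fun σ _ => contDiff_const.mul (contDiff_prod fun i _ => h (σ i) i)

section Aux

variable {m : ℕ}

lemma det_updateRow_updateRow_swap (A : Matrix (Fin m) (Fin m) ℝ) {r l : Fin m} (h : r ≠ l)
    (u w : Fin m → ℝ) :
    ((A.updateRow r u).updateRow l w).det = - ((A.updateRow l u).updateRow r w).det := by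
  have hM : (A.updateRow l u).updateRow r w
      = ((A.updateRow r u).updateRow l w).submatrix (Equiv.swap r l) id := by
    ext i k
    by_cases hir : i = r
    · subst hir
      simp [Matrix.updateRow_apply, Matrix.submatrix_apply, Equiv.swap_apply_left, h, h.symm]
    · by_cases hil : i = l
      · subst hil
        simp [Matrix.updateRow_apply, Matrix.submatrix_apply, Equiv.swap_apply_right, h, h.symm,
          Ne.symm h]
      · simp [Matrix.updateRow_apply, Matrix.submatrix_apply,
          Equiv.swap_apply_of_ne_of_ne hir hil, hir, hil]
  rw [hM, Matrix.det_permute]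
  simp [Equiv.Perm.sign_swap h]

end Aux

noncomputable section
namespace Reynolds

variable {n : ℕ}

/-- Spatial Jacobian matrix `A(p) i k = ∂φ_k/∂x_i (p)` (computed via the joint derivative). -/
def mat (φ : (Fin (n + 1) → ℝ) × ℝ → (Fin (n + 1) → ℝ)) (p : (Fin (n + 1) → ℝ) × ℝ) :
    Matrix (Fin (n + 1)) (Fin (n + 1)) ℝ :=
  Matrix.of fun i k => fderiv ℝ φ p (Pi.single i 1, 0) k

/-- Velocity `v(p) = ∂φ/∂t (p)`. -/
def vel (φ : (Fin (n + 1) → ℝ) × ℝ → (Fin (n + 1) → ℝ)) (p : (Fin (n + 1) → ℝ) × ℝ) :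
    Fin (n + 1) → ℝ :=
  fderiv ℝ φ p (0, 1)

/-- Time derivative of the Jacobian matrix. -/
def bmat (φ : (Fin (n + 1) → ℝ) × ℝ → (Fin (n + 1) → ℝ)) (p : (Fin (n + 1) → ℝ) × ℝ) :
    Matrix (Fin (n + 1)) (Fin (n + 1)) ℝ :=
  Matrix.of fun i k => fderiv ℝ (fun q => mat φ q i k) p ((0 : Fin (n + 1) → ℝ), 1)

/-- Spatial derivative (in direction `r`) of the Jacobian matrix. -/
def tdm (φ : (Fin (n + 1) → ℝ) × ℝ → (Fin (n + 1) → ℝ)) (r : Fin (n + 1))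
    (p : (Fin (n + 1) → ℝ) × ℝ) : Matrix (Fin (n + 1)) (Fin (n + 1)) ℝ :=
  Matrix.of fun l k => fderiv ℝ (fun q => mat φ q l k) p ((Pi.single r 1 : Fin (n + 1) → ℝ), 0)

def gfun (φ : (Fin (n + 1) → ℝ) × ℝ → (Fin (n + 1) → ℝ)) (f : (Fin (n + 1) → ℝ) × ℝ → ℝ)
    (p : (Fin (n + 1) → ℝ) × ℝ) : ℝ :=
  f (φ p, p.2) * (mat φ p).det

def Gfun (φ : (Fin (n + 1) → ℝ) × ℝ → (Fin (n + 1) → ℝ)) (f : (Fin (n + 1) → ℝ) × ℝ → ℝ)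
    (p : (Fin (n + 1) → ℝ) × ℝ) : ℝ :=
  fderiv ℝ f (φ p, p.2) (vel φ p, 1) * (mat φ p).det +
    f (φ p, p.2) * ∑ i, ((mat φ p).updateRow i (bmat φ p i)).det

def Ffun (φ : (Fin (n + 1) → ℝ) × ℝ → (Fin (n + 1) → ℝ)) (f : (Fin (n + 1) → ℝ) × ℝ → ℝ)
    (t : ℝ) (r : Fin (n + 1)) (y : Fin (n + 1) → ℝ) : ℝ :=
  f (φ (y, t), t) * ∑ j, vel φ (y, t) j * (mat φ (y, t)).adjugate j r

variable {φ : (Fin (n + 1) → ℝ) × ℝ → (Fin (n + 1) → ℝ)} {f : (Fin (n + 1) → ℝ) × ℝ → ℝ}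

section Basic

variable (hφ : ContDiff ℝ 2 φ) (hf : ContDiff ℝ 1 f)
include hφ

/-- The `fderiv` of a spatial slice, as it appears in the theorem statement, agrees with `mat`. -/
lemma entry_eq (τ : ℝ) (x : Fin (n + 1) → ℝ) (i : Fin (n + 1)) :
    fderiv ℝ (fun y => φ (y, τ)) x (Pi.single i 1) = fderiv ℝ φ (x, τ) (Pi.single i 1, 0) := by
  have h1 : HasFDerivAt (fun y : Fin (n + 1) → ℝ => (y, τ))
      ((ContinuousLinearMap.id ℝ (Fin (n + 1) → ℝ)).prod 0) x :=
    (hasFDerivAt_id x).prodMk (hasFDerivAt_const τ x)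
  have h2 : HasFDerivAt φ (fderiv ℝ φ (x, τ)) (x, τ) :=
    ((hφ.of_le one_le_two).differentiable one_ne_zero (x, τ)).hasFDerivAt
  have hc : HasFDerivAt (fun y => φ (y, τ))
      ((fderiv ℝ φ (x, τ)).comp ((ContinuousLinearMap.id ℝ (Fin (n + 1) → ℝ)).prod 0)) x :=
    h2.comp x h1
  rw [hc.fderiv]
  rfl

lemma mat_eq (τ : ℝ) (x : Fin (n + 1) → ℝ) :
    (Matrix.of fun i k => fderiv ℝ (fun y => φ (y, τ)) x (Pi.single i 1) k) = mat φ (x, τ) := by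
  ext i k
  exact congrFun (entry_eq hφ τ x i) k

lemma hasDerivAt_phi_coord (τ : ℝ) (x : Fin (n + 1) → ℝ) (j : Fin (n + 1)) :
    HasDerivAt (fun τ' => φ (x, τ') j) (vel φ (x, τ) j) τ := by
  have h1 : HasDerivAt (fun τ' : ℝ => ((x : Fin (n + 1) → ℝ), τ')) ((0 : Fin (n + 1) → ℝ), 1) τ :=
    (hasDerivAt_const τ x).prodMk (hasDerivAt_id τ)
  have h2 : HasFDerivAt φ (fderiv ℝ φ (x, τ)) (x, τ) :=
    ((hφ.of_le one_le_two).differentiable one_ne_zero (x, τ)).hasFDerivAt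
  have h3 := h2.comp_hasDerivAt τ h1
  have h4 := (ContinuousLinearMap.proj (R := ℝ) (φ := fun _ : Fin (n + 1) => ℝ)
    j).hasFDerivAt.comp_hasDerivAt τ h3
  exact h4

lemma deriv_phi_coord_eq (τ : ℝ) (x : Fin (n + 1) → ℝ) (j : Fin (n + 1)) :
    deriv (fun τ' => φ (x, τ') j) τ = vel φ (x, τ) j :=
  (hasDerivAt_phi_coord hφ τ x j).deriv

lemma contDiff_mat_entry (i k : Fin (n + 1)) : ContDiff ℝ 1 fun p => mat φ p i k := by
  have hD : ContDiff ℝ 1 (fderiv ℝ φ) := hφ.fderiv_right (by norm_num)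
  have h1 := (ContinuousLinearMap.apply ℝ (Fin (n + 1) → ℝ)
    ((Pi.single i 1 : Fin (n + 1) → ℝ), (0 : ℝ))).contDiff.comp hD
  exact (ContinuousLinearMap.proj (R := ℝ) (φ := fun _ : Fin (n + 1) => ℝ) k).contDiff.comp h1

lemma contDiff_vel_coord (j : Fin (n + 1)) : ContDiff ℝ 1 fun p => vel φ p j := by
  have hD : ContDiff ℝ 1 (fderiv ℝ φ) := hφ.fderiv_right (by norm_num)
  have h1 := (ContinuousLinearMap.apply ℝ (Fin (n + 1) → ℝ)
    ((0 : Fin (n + 1) → ℝ), (1 : ℝ))).contDiff.comp hD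
  exact (ContinuousLinearMap.proj (R := ℝ) (φ := fun _ : Fin (n + 1) => ℝ) j).contDiff.comp h1

lemma continuous_bmat_entry (i k : Fin (n + 1)) : Continuous fun p => bmat φ p i k := by
  have h0 : ContDiff ℝ 0 (fderiv ℝ fun q => mat φ q i k) :=
    (contDiff_mat_entry hφ i k).fderiv_right (le_refl 1)
  have h1 := (ContinuousLinearMap.apply ℝ ℝ
    ((0 : Fin (n + 1) → ℝ), (1 : ℝ))).continuous.comp h0.continuous
  exact h1

lemma continuous_tdm_entry (r l k : Fin (n + 1)) : Continuous fun p => tdm φ r p l k := by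
  have h0 : ContDiff ℝ 0 (fderiv ℝ fun q => mat φ q l k) :=
    (contDiff_mat_entry hφ l k).fderiv_right (le_refl 1)
  exact (ContinuousLinearMap.apply ℝ ℝ
    ((Pi.single r 1 : Fin (n + 1) → ℝ), (0 : ℝ))).continuous.comp h0.continuous

end Basic

end Reynolds
end

noncomputable section
namespace Reynolds

variable {n : ℕ} {φ : (Fin (n + 1) → ℝ) × ℝ → Fin (n + 1) → ℝ} {f : (Fin (n + 1) → ℝ) × ℝ → ℝ}

section Symm

variable (hφ : ContDiff ℝ 2 φ)
include hφ

lemma fderiv_fderiv_symm_coord (p : (Fin (n + 1) → ℝ) × ℝ) (w w' : (Fin (n + 1) → ℝ) × ℝ)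
    (k : Fin (n + 1)) :
    fderiv ℝ (fun q => fderiv ℝ φ q w k) p w' = fderiv ℝ (fun q => fderiv ℝ φ q w' k) p w := by
  have hD : ContDiff ℝ 1 (fderiv ℝ φ) := hφ.fderiv_right (by norm_num)
  have key : ∀ w₀ : (Fin (n + 1) → ℝ) × ℝ, fderiv ℝ (fun q => fderiv ℝ φ q w₀ k) p
      = (ContinuousLinearMap.proj (R := ℝ) (φ := fun _ : Fin (n + 1) => ℝ) k).comp
          (fderiv ℝ (fun q => fderiv ℝ φ q w₀) p) := by
    intro w₀
    have hdiff : DifferentiableAt ℝ (fun q => fderiv ℝ φ q w₀) p :=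
      (((ContinuousLinearMap.apply ℝ (Fin (n + 1) → ℝ) w₀).contDiff.comp
        hD).differentiable one_ne_zero p)
    have hc : HasFDerivAt (fun q => fderiv ℝ φ q w₀ k)
        ((ContinuousLinearMap.proj (R := ℝ) (φ := fun _ : Fin (n + 1) => ℝ) k).comp
          (fderiv ℝ (fun q => fderiv ℝ φ q w₀) p)) p :=
      (ContinuousLinearMap.proj (R := ℝ) (φ := fun _ : Fin (n + 1) => ℝ)
        k).hasFDerivAt.comp p hdiff.hasFDerivAt
    exact hc.fderiv
  rw [key w, key w']
  simp only [ContinuousLinearMap.comp_apply]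
  rw [fderiv_fderiv_symm hφ p w w']

lemma vel_symm (p : (Fin (n + 1) → ℝ) × ℝ) (r j : Fin (n + 1)) :
    fderiv ℝ (fun q => vel φ q j) p ((Pi.single r 1 : Fin (n + 1) → ℝ), 0) = bmat φ p r j := by
  have h := fderiv_fderiv_symm_coord hφ p ((0 : Fin (n + 1) → ℝ), 1)
    ((Pi.single r 1 : Fin (n + 1) → ℝ), 0) j
  exact h

lemma tdm_symm (p : (Fin (n + 1) → ℝ) × ℝ) (r l k : Fin (n + 1)) :
    tdm φ r p l k = tdm φ l p r k := by
  exact fderiv_fderiv_symm_coord hφ p ((Pi.single l 1 : Fin (n + 1) → ℝ), 0)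
    ((Pi.single r 1 : Fin (n + 1) → ℝ), 0) k

end Symm

section StepA

variable (hφ : ContDiff ℝ 2 φ) (hf : ContDiff ℝ 1 f)
include hφ hf

lemma hasDerivAt_gfun (x : Fin (n + 1) → ℝ) (τ : ℝ) :
    HasDerivAt (fun τ' => gfun φ f (x, τ')) (Gfun φ f (x, τ)) τ := by
  have hline : HasDerivAt (fun τ' : ℝ => ((x, τ') : (Fin (n + 1) → ℝ) × ℝ))
      ((0 : Fin (n + 1) → ℝ), (1 : ℝ)) τ := (hasDerivAt_const τ x).prodMk (hasDerivAt_id τ)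
  have hphi : HasDerivAt (fun τ' => φ (x, τ')) (vel φ (x, τ)) τ :=
    ((hφ.of_le one_le_two).differentiable one_ne_zero (x, τ)).hasFDerivAt.comp_hasDerivAt τ hline
  have hpair : HasDerivAt (fun τ' => ((φ (x, τ'), τ') : (Fin (n + 1) → ℝ) × ℝ))
      (vel φ (x, τ), 1) τ := hphi.prodMk (hasDerivAt_id τ)
  have hdf : HasFDerivAt f (fderiv ℝ f (φ (x, τ), τ)) (φ (x, τ), τ) :=
    ((hf.differentiable one_ne_zero) (φ (x, τ), τ)).hasFDerivAt
  have h₁ : HasDerivAt (fun τ' => f (φ (x, τ'), τ'))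
      (fderiv ℝ f (φ (x, τ), τ) (vel φ (x, τ), 1)) τ := by
    have h := (HasFDerivAt.comp (g := f)
      (f := fun τ' => ((φ (x, τ'), τ') : (Fin (n + 1) → ℝ) × ℝ)) τ hdf
      hpair.hasFDerivAt).hasDerivAt
    exact HasFDerivAt.comp_hasDerivAt
      (f := fun τ' => ((φ (x, τ'), τ') : (Fin (n + 1) → ℝ) × ℝ)) τ hdf hpair
  have hent : ∀ i k : Fin (n + 1),
      HasDerivAt (fun τ' => mat φ (x, τ') i k) (bmat φ (x, τ) i k) τ := fun i k =>
    (((contDiff_mat_entry hφ i k).differentiable one_ne_zero)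
      (x, τ)).hasFDerivAt.comp_hasDerivAt τ hline
  have h₂ : HasDerivAt (fun τ' => (mat φ (x, τ')).det)
      (∑ i, ((mat φ (x, τ)).updateRow i (bmat φ (x, τ) i)).det) τ :=
    hasDerivAt_det (fun i k => hent i k)
  exact h₁.mul h₂

lemma continuous_gfun : Continuous (gfun φ f) := by
  have h1 : Continuous fun p : (Fin (n + 1) → ℝ) × ℝ => f (φ p, p.2) :=
    hf.continuous.comp ((hφ.continuous).prodMk continuous_snd)
  have h2 : Continuous fun p => (mat φ p).det :=
    (contDiff_det_comp (k := 0) fun i k => (contDiff_mat_entry hφ i k).of_le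
      (by norm_num)).continuous
  exact h1.mul h2

lemma continuous_Gfun : Continuous (Gfun φ f) := by
  have hmapc : Continuous fun p : (Fin (n + 1) → ℝ) × ℝ => ((φ p, p.2) : (Fin (n + 1) → ℝ) × ℝ) :=
    (hφ.continuous).prodMk continuous_snd
  have hdf : Continuous fun p : (Fin (n + 1) → ℝ) × ℝ => fderiv ℝ f (φ p, p.2) :=
    ((hf.fderiv_right (m := 0) (by norm_num)).continuous).comp hmapc
  have hvel : Continuous fun p : (Fin (n + 1) → ℝ) × ℝ =>
      ((vel φ p, 1) : ((Fin (n + 1) → ℝ) × ℝ)) := by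
    have hD : ContDiff ℝ 1 (fderiv ℝ φ) := hφ.fderiv_right (by norm_num)
    exact ((ContinuousLinearMap.apply ℝ (Fin (n + 1) → ℝ)
      ((0 : Fin (n + 1) → ℝ), (1 : ℝ))).continuous.comp hD.continuous).prodMk continuous_const
  have h1 : Continuous fun p : (Fin (n + 1) → ℝ) × ℝ =>
      fderiv ℝ f (φ p, p.2) (vel φ p, 1) := hdf.clm_apply hvel
  have h2 : Continuous fun p => (mat φ p).det :=
    (contDiff_det_comp (k := 0) fun i k => (contDiff_mat_entry hφ i k).of_le
      (by norm_num)).continuous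
  have h3 : Continuous fun p : (Fin (n + 1) → ℝ) × ℝ => f (φ p, p.2) :=
    hf.continuous.comp hmapc
  have h4 : Continuous fun p : (Fin (n + 1) → ℝ) × ℝ =>
      ∑ i, ((mat φ p).updateRow i (bmat φ p i)).det := by
    refine continuous_finset_sum _ ?_
    intro i _
    refine (contDiff_det_comp (k := 0) ?_).continuous
    intro l k
    by_cases hli : l = i
    · refine contDiff_zero.2 ?_
      have hEq : (fun p => ((mat φ p).updateRow i (bmat φ p i)) l k)
          = fun p => bmat φ p i k := by
        funext p
        rw [hli]
        exact congrFun Matrix.updateRow_self k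
      rw [hEq]
      exact continuous_bmat_entry hφ i k
    · refine contDiff_zero.2 ?_
      have hEq : (fun p => ((mat φ p).updateRow i (bmat φ p i)) l k)
          = fun p => mat φ p l k := by
        funext p
        exact congrFun (Matrix.updateRow_ne hli) k
      rw [hEq]
      exact (contDiff_mat_entry hφ l k).continuous
  exact (h1.mul h2).add (h3.mul h4)

lemma contDiff_Ffun (t : ℝ) (r : Fin (n + 1)) : ContDiff ℝ 1 (Ffun φ f t r) := by
  have hemb : ContDiff ℝ 1 (fun y : Fin (n + 1) → ℝ => ((y, t) : (Fin (n + 1) → ℝ) × ℝ)) :=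
    contDiff_id.prodMk contDiff_const
  have h1 : ContDiff ℝ 1 fun y : Fin (n + 1) → ℝ => f (φ (y, t), t) :=
    hf.comp ((((hφ.of_le one_le_two).comp hemb)).prodMk contDiff_const)
  have h2 : ∀ j, ContDiff ℝ 1 fun y : Fin (n + 1) → ℝ => vel φ (y, t) j := fun j =>
    (contDiff_vel_coord hφ j).comp hemb
  have h3 : ∀ j, ContDiff ℝ 1 fun y : Fin (n + 1) → ℝ => (mat φ (y, t)).adjugate j r := by
    intro j
    have heq : (fun y : Fin (n + 1) → ℝ => (mat φ (y, t)).adjugate j r)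
        = fun y => ((mat φ (y, t)).updateRow r (Pi.single j 1)).det := by
      funext y
      rw [Matrix.adjugate_apply]
    rw [heq]
    refine contDiff_det_comp ?_
    intro l k
    by_cases hlr : l = r
    · subst hlr
      simp only [Matrix.updateRow_self]
      exact contDiff_const
    · have : (fun y : Fin (n + 1) → ℝ => ((mat φ (y, t)).updateRow r (Pi.single j 1)) l k)
          = fun y => mat φ (y, t) l k := by
        funext y
        exact congrFun (Matrix.updateRow_ne hlr) k
      rw [this]
      exact (contDiff_mat_entry hφ l k).comp hemb
  exact h1.mul (ContDiff.sum fun j _ => (h2 j).mul (h3 j))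

end StepA

end Reynolds
end

noncomputable section
namespace Reynolds

variable {n : ℕ} {φ : (Fin (n + 1) → ℝ) × ℝ → Fin (n + 1) → ℝ} {f : (Fin (n + 1) → ℝ) × ℝ → ℝ}

lemma comp_line {F : Type*} [NormedAddCommGroup F] [NormedSpace ℝ F]
    {g : (Fin (n + 1) → ℝ) × ℝ → F} {x : Fin (n + 1) → ℝ} {t : ℝ} (er : Fin (n + 1) → ℝ)
    (hg : DifferentiableAt ℝ g (x, t)) :
    HasDerivAt (fun s : ℝ => g (x + s • er, t)) (fderiv ℝ g (x, t) (er, 0)) 0 := by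
  have h1 : HasDerivAt (fun s : ℝ => x + s • er) er 0 := by
    simpa using ((hasDerivAt_id (0 : ℝ)).smul_const er).const_add x
  have hq : HasDerivAt (fun s : ℝ => ((x + s • er, t) : (Fin (n + 1) → ℝ) × ℝ))
      ((er, (0 : ℝ))) 0 := h1.prodMk (hasDerivAt_const 0 t)
  have hg' : HasFDerivAt g (fderiv ℝ g (x, t))
      ((fun s : ℝ => ((x + s • er, t) : (Fin (n + 1) → ℝ) × ℝ)) 0) := by
    simpa using hg.hasFDerivAt
  exact HasFDerivAt.comp_hasDerivAt
    (f := fun s : ℝ => ((x + s • er, t) : (Fin (n + 1) → ℝ) × ℝ)) 0 hg' hq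

lemma comp_line' {g : (Fin (n + 1) → ℝ) → ℝ} {x : Fin (n + 1) → ℝ} (er : Fin (n + 1) → ℝ)
    (hg : DifferentiableAt ℝ g x) :
    HasDerivAt (fun s : ℝ => g (x + s • er)) (fderiv ℝ g x er) 0 := by
  have h1 : HasDerivAt (fun s : ℝ => x + s • er) er 0 := by
    simpa using ((hasDerivAt_id (0 : ℝ)).smul_const er).const_add x
  have hg' : HasFDerivAt g (fderiv ℝ g x) ((fun s : ℝ => x + s • er) 0) := by
    simpa using hg.hasFDerivAt
  exact HasFDerivAt.comp_hasDerivAt (f := fun s : ℝ => x + s • er) 0 hg' h1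

section StepB

variable (hφ : ContDiff ℝ 2 φ) (hf : ContDiff ℝ 1 f)
include hφ hf

lemma comp_line_f (x : Fin (n + 1) → ℝ) (t : ℝ) (er : Fin (n + 1) → ℝ) :
    HasDerivAt (fun s : ℝ => f (φ (x + s • er, t), t))
      (fderiv ℝ f (φ (x, t), t) (fderiv ℝ φ (x, t) (er, 0), 0)) 0 := by
  have hφl : HasDerivAt (fun s : ℝ => φ (x + s • er, t)) (fderiv ℝ φ (x, t) (er, 0)) 0 :=
    comp_line er (((hφ.of_le one_le_two).differentiable one_ne_zero) (x, t))
  have hpair := hφl.prodMk (hasDerivAt_const (0 : ℝ) t)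
  have hdf : HasFDerivAt f (fderiv ℝ f (φ (x, t), t))
      ((fun s : ℝ => ((φ (x + s • er, t), t) : (Fin (n + 1) → ℝ) × ℝ)) 0) := by
    simpa using ((hf.differentiable one_ne_zero) (φ (x, t), t)).hasFDerivAt
  exact HasFDerivAt.comp_hasDerivAt
    (f := fun s : ℝ => ((φ (x + s • er, t), t) : (Fin (n + 1) → ℝ) × ℝ)) 0 hdf hpair

lemma fderiv_Ffun_apply (t : ℝ) (x : Fin (n + 1) → ℝ) (r : Fin (n + 1)) :
    fderiv ℝ (Ffun φ f t r) x (Pi.single r 1)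
      = fderiv ℝ f (φ (x, t), t) (fderiv ℝ φ (x, t) ((Pi.single r 1 : Fin (n + 1) → ℝ), 0), 0)
          * (∑ j, vel φ (x, t) j * (mat φ (x, t)).adjugate j r)
        + f (φ (x, t), t) *
            ∑ j, (bmat φ (x, t) r j * (mat φ (x, t)).adjugate j r
              + vel φ (x, t) j *
                ∑ l, (((mat φ (x, t)).updateRow r (Pi.single j 1)).updateRow l
                  (fun k => if l = r then 0 else tdm φ r (x, t) l k)).det) := by
  have hx0 : x + (0 : ℝ) • (Pi.single r 1 : Fin (n + 1) → ℝ) = x := by simp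
  have hvel : ∀ j, HasDerivAt
      (fun s : ℝ => vel φ (x + s • (Pi.single r 1 : Fin (n + 1) → ℝ), t) j)
      (bmat φ (x, t) r j) 0 := by
    intro j
    have h := comp_line (g := fun p => vel φ p j) (Pi.single r 1)
      (((contDiff_vel_coord hφ j).differentiable one_ne_zero) (x, t))
    rwa [vel_symm hφ (x, t) r j] at h
  have hadj : ∀ j, HasDerivAt
      (fun s : ℝ => (mat φ (x + s • (Pi.single r 1 : Fin (n + 1) → ℝ), t)).adjugate j r)
      (∑ l, (((mat φ (x, t)).updateRow r (Pi.single j 1)).updateRow l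
        (fun k => if l = r then 0 else tdm φ r (x, t) l k)).det) 0 := by
    intro j
    have heq : (fun s : ℝ =>
          (mat φ (x + s • (Pi.single r 1 : Fin (n + 1) → ℝ), t)).adjugate j r)
        = fun s : ℝ =>
          ((mat φ (x + s • (Pi.single r 1 : Fin (n + 1) → ℝ), t)).updateRow r
            (Pi.single j 1)).det := by
      funext s
      rw [Matrix.adjugate_apply]
    rw [heq]
    have hent : ∀ l k : Fin (n + 1), HasDerivAt
        (fun s : ℝ => ((mat φ (x + s • (Pi.single r 1 : Fin (n + 1) → ℝ), t)).updateRow r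
          (Pi.single j 1)) l k)
        ((fun l k => if l = r then 0 else tdm φ r (x, t) l k : Matrix (Fin (n+1)) (Fin (n+1)) ℝ) l k) 0 := by
      intro l k
      by_cases hlr : l = r
      · have hfun : (fun s : ℝ =>
            ((mat φ (x + s • (Pi.single r 1 : Fin (n + 1) → ℝ), t)).updateRow r
              (Pi.single j 1)) l k) = fun _ : ℝ => (Pi.single j 1 : Fin (n + 1) → ℝ) k := by
          funext s
          rw [hlr]
          exact congrFun Matrix.updateRow_self k
        rw [hfun]
        simp only [hlr, if_pos rfl]
        exact hasDerivAt_const 0 _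
      · have hfun : (fun s : ℝ =>
            ((mat φ (x + s • (Pi.single r 1 : Fin (n + 1) → ℝ), t)).updateRow r
              (Pi.single j 1)) l k)
            = fun s : ℝ => mat φ (x + s • (Pi.single r 1 : Fin (n + 1) → ℝ), t) l k := by
          funext s
          exact congrFun (Matrix.updateRow_ne hlr) k
        rw [hfun]
        simp only [hlr, if_neg hlr]
        exact comp_line (g := fun p => mat φ p l k) (Pi.single r 1)
          (((contDiff_mat_entry hφ l k).differentiable one_ne_zero) (x, t))
    have hDet := hasDerivAt_det (τ := 0)
      (M := fun s : ℝ => (mat φ (x + s • (Pi.single r 1 : Fin (n + 1) → ℝ), t)).updateRow r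
        (Pi.single j 1))
      (M' := fun l k => if l = r then 0 else tdm φ r (x, t) l k) hent
    beta_reduce at hDet
    rw [hx0] at hDet
    exact hDet
  have hsum : HasDerivAt (fun s : ℝ =>
      ∑ j, vel φ (x + s • (Pi.single r 1 : Fin (n + 1) → ℝ), t) j *
        (mat φ (x + s • (Pi.single r 1 : Fin (n + 1) → ℝ), t)).adjugate j r)
      (∑ j, (bmat φ (x, t) r j *
          (mat φ (x + (0:ℝ) • (Pi.single r 1 : Fin (n + 1) → ℝ), t)).adjugate j r
        + vel φ (x + (0:ℝ) • (Pi.single r 1 : Fin (n + 1) → ℝ), t) j *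
          ∑ l, (((mat φ (x, t)).updateRow r (Pi.single j 1)).updateRow l
            (fun k => if l = r then 0 else tdm φ r (x, t) l k)).det)) 0 :=
    HasDerivAt.fun_sum fun j _ => (hvel j).mul (hadj j)
  beta_reduce at hsum
  rw [hx0] at hsum
  have hprod := (comp_line_f hφ hf x t (Pi.single r 1)).mul hsum
  beta_reduce at hprod
  rw [hx0] at hprod
  have hF : DifferentiableAt ℝ (Ffun φ f t r) x :=
    ((contDiff_Ffun hφ hf t r).differentiable one_ne_zero) x
  have h1 := comp_line' (Pi.single r 1) hF
  have h2 : HasDerivAt (fun s : ℝ => Ffun φ f t r (x + s • (Pi.single r 1 : Fin (n + 1) → ℝ)))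
      (fderiv ℝ f (φ (x, t), t) (fderiv ℝ φ (x, t) ((Pi.single r 1 : Fin (n + 1) → ℝ), 0), 0)
          * (∑ j, vel φ (x, t) j * (mat φ (x, t)).adjugate j r)
        + f (φ (x, t), t) *
            ∑ j, (bmat φ (x, t) r j * (mat φ (x, t)).adjugate j r
              + vel φ (x, t) j *
                ∑ l, (((mat φ (x, t)).updateRow r (Pi.single j 1)).updateRow l
                  (fun k => if l = r then 0 else tdm φ r (x, t) l k)).det)) 0 := hprod
  exact h1.unique h2

end StepB

end Reynolds
end

noncomputable section
namespace Reynolds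

lemma sum_antisymm {m : ℕ} (X : Fin m → Fin m → ℝ) (h : ∀ r l, X r l = - X l r) :
    ∑ r, ∑ l, X r l = 0 := by
  have hs : ∑ r, ∑ l, X r l = ∑ r, ∑ l, X l r := Finset.sum_comm
  have hz : (∑ r : Fin m, ∑ l, X r l) + (∑ r : Fin m, ∑ l, X l r) = 0 := by
    rw [← Finset.sum_add_distrib]
    refine Finset.sum_eq_zero fun r _ => ?_
    rw [← Finset.sum_add_distrib]
    refine Finset.sum_eq_zero fun l _ => ?_
    rw [h r l]
    ring
  linarith

variable {n : ℕ} {φ : (Fin (n + 1) → ℝ) × ℝ → Fin (n + 1) → ℝ} {f : (Fin (n + 1) → ℝ) × ℝ → ℝ}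

section Key

variable (hφ : ContDiff ℝ 2 φ) (hf : ContDiff ℝ 1 f)
include hφ hf

lemma key_identity (t : ℝ) (x : Fin (n + 1) → ℝ) :
    Gfun φ f (x, t)
      = fderiv ℝ f (φ (x, t), t) ((0 : Fin (n + 1) → ℝ), 1) * (mat φ (x, t)).det
        + ∑ r, fderiv ℝ (Ffun φ f t r) x (Pi.single r 1) := by
  have hG : Gfun φ f (x, t)
      = fderiv ℝ f (φ (x, t), t) (vel φ (x, t), 1) * (mat φ (x, t)).det
        + f (φ (x, t), t) * ∑ i, ((mat φ (x, t)).updateRow i (bmat φ (x, t) i)).det := rfl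
  rw [hG, show (∑ r, fderiv ℝ (Ffun φ f t r) x (Pi.single r 1))
      = ∑ r, (fderiv ℝ f (φ (x, t), t)
            (fderiv ℝ φ (x, t) ((Pi.single r 1 : Fin (n + 1) → ℝ), 0), 0)
          * (∑ j, vel φ (x, t) j * (mat φ (x, t)).adjugate j r)
        + f (φ (x, t), t) *
            ∑ j, (bmat φ (x, t) r j * (mat φ (x, t)).adjugate j r
              + vel φ (x, t) j *
                ∑ l, (((mat φ (x, t)).updateRow r (Pi.single j 1)).updateRow l
                  (fun k => if l = r then 0 else tdm φ r (x, t) l k)).det))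
    from Finset.sum_congr rfl fun r _ => fderiv_Ffun_apply hφ hf t x r]
  -- split the time-direction derivative of f
  have hsplit : fderiv ℝ f (φ (x, t), t) (vel φ (x, t), 1)
      = fderiv ℝ f (φ (x, t), t) ((0 : Fin (n + 1) → ℝ), 1)
        + fderiv ℝ f (φ (x, t), t) (vel φ (x, t), 0) := by
    rw [← map_add]
    congr 1
    rw [Prod.mk_add_mk]
    simp
  -- the transport term
  have hT1 : ∑ r, fderiv ℝ f (φ (x, t), t)
        (fderiv ℝ φ (x, t) ((Pi.single r 1 : Fin (n + 1) → ℝ), 0), 0)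
        * (∑ j, vel φ (x, t) j * (mat φ (x, t)).adjugate j r)
      = fderiv ℝ f (φ (x, t), t) (vel φ (x, t), 0) * (mat φ (x, t)).det := by
    have hvec : (∑ r, (∑ j, vel φ (x, t) j * (mat φ (x, t)).adjugate j r) •
          ((fderiv ℝ φ (x, t) ((Pi.single r 1 : Fin (n + 1) → ℝ), 0), (0 : ℝ))
            : (Fin (n + 1) → ℝ) × ℝ))
        = (((mat φ (x, t)).det • vel φ (x, t), (0 : ℝ)) : (Fin (n + 1) → ℝ) × ℝ) := by
      have h2 : (∑ r, (∑ j, vel φ (x, t) j * (mat φ (x, t)).adjugate j r) •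
          (fderiv ℝ φ (x, t) ((Pi.single r 1 : Fin (n + 1) → ℝ), 0)))
          = (mat φ (x, t)).det • vel φ (x, t) := by
        funext k
        rw [Finset.sum_apply]
        have : ∀ r, ((∑ j, vel φ (x, t) j * (mat φ (x, t)).adjugate j r) •
            fderiv ℝ φ (x, t) ((Pi.single r 1 : Fin (n + 1) → ℝ), 0)) k
            = ∑ j, vel φ (x, t) j * ((mat φ (x, t)).adjugate j r * mat φ (x, t) r k) := by
          intro r
          rw [Pi.smul_apply, smul_eq_mul, Finset.sum_mul]
          refine Finset.sum_congr rfl fun j _ => ?_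
          rw [mul_assoc]
          rfl
        rw [Finset.sum_congr rfl fun r _ => this r, Finset.sum_comm]
        have : ∀ j, ∑ r, vel φ (x, t) j * ((mat φ (x, t)).adjugate j r * mat φ (x, t) r k)
            = vel φ (x, t) j * (((mat φ (x, t)).adjugate * mat φ (x, t)) j k) := by
          intro j
          rw [Matrix.mul_apply, Finset.mul_sum]
        rw [Finset.sum_congr rfl fun j _ => this j]
        simp [Matrix.adjugate_mul, Matrix.smul_apply, Matrix.one_apply, Pi.smul_apply,
          mul_comm, mul_left_comm, Finset.sum_ite_eq, Finset.mul_sum]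
      have h3 : (∑ r, (∑ j, vel φ (x, t) j * (mat φ (x, t)).adjugate j r) •
            ((fderiv ℝ φ (x, t) ((Pi.single r 1 : Fin (n + 1) → ℝ), 0), (0 : ℝ))
              : (Fin (n + 1) → ℝ) × ℝ)).1 = (mat φ (x, t)).det • vel φ (x, t) := by
        rw [Prod.fst_sum]
        rw [← h2]
        exact Finset.sum_congr rfl fun r _ => rfl
      have h4 : (∑ r, (∑ j, vel φ (x, t) j * (mat φ (x, t)).adjugate j r) •
            ((fderiv ℝ φ (x, t) ((Pi.single r 1 : Fin (n + 1) → ℝ), 0), (0 : ℝ))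
              : (Fin (n + 1) → ℝ) × ℝ)).2 = (0 : ℝ) := by
        rw [Prod.snd_sum]
        simp
      exact Prod.ext h3 h4
    calc ∑ r, fderiv ℝ f (φ (x, t), t)
          (fderiv ℝ φ (x, t) ((Pi.single r 1 : Fin (n + 1) → ℝ), 0), 0)
          * (∑ j, vel φ (x, t) j * (mat φ (x, t)).adjugate j r)
        = ∑ r, fderiv ℝ f (φ (x, t), t)
            ((∑ j, vel φ (x, t) j * (mat φ (x, t)).adjugate j r) •
              ((fderiv ℝ φ (x, t) ((Pi.single r 1 : Fin (n + 1) → ℝ), 0), (0 : ℝ))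
                : (Fin (n + 1) → ℝ) × ℝ)) := by
          refine Finset.sum_congr rfl fun r _ => ?_
          rw [_root_.map_smul, smul_eq_mul, mul_comm]
      _ = fderiv ℝ f (φ (x, t), t) (((mat φ (x, t)).det • vel φ (x, t), (0 : ℝ))) := by
          rw [← map_sum, hvec]
      _ = fderiv ℝ f (φ (x, t), t) (vel φ (x, t), 0) * (mat φ (x, t)).det := by
          have : (((mat φ (x, t)).det • vel φ (x, t), (0 : ℝ)) : (Fin (n + 1) → ℝ) × ℝ)
              = (mat φ (x, t)).det • ((vel φ (x, t), (0 : ℝ)) : (Fin (n + 1) → ℝ) × ℝ) := by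
            rw [Prod.smul_mk, smul_zero]
          rw [this, _root_.map_smul, smul_eq_mul, mul_comm]
  -- the Jacobi term
  have hT2 : ∀ i : Fin (n + 1), ((mat φ (x, t)).updateRow i (bmat φ (x, t) i)).det
      = ∑ j, bmat φ (x, t) i j * (mat φ (x, t)).adjugate j i := fun i =>
    det_updateRow_eq_sum_adjugate (mat φ (x, t)) i (bmat φ (x, t) i)
  -- the Piola term vanishes
  have hT3 : ∀ j : Fin (n + 1), ∑ r, ∑ l,
      (((mat φ (x, t)).updateRow r (Pi.single j 1)).updateRow l
        (fun k => if l = r then 0 else tdm φ r (x, t) l k)).det = 0 := by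
    intro j
    refine sum_antisymm _ fun r l => ?_
    by_cases hrl : r = l
    · subst hrl
      have hzero : (fun k => if r = r then (0 : ℝ) else tdm φ r (x, t) r k)
          = fun _ => (0 : ℝ) := by
        funext k
        simp
      rw [hzero]
      have hdet0 : (((mat φ (x, t)).updateRow r (Pi.single j 1)).updateRow r
          (fun _ => (0 : ℝ))).det = 0 := by
        refine Matrix.det_eq_zero_of_row_eq_zero r fun k => ?_
        exact congrFun Matrix.updateRow_self k
      rw [hdet0]
      ring
    · have h1 : (fun k => if l = r then (0 : ℝ) else tdm φ r (x, t) l k)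
          = fun k => tdm φ r (x, t) l k := by
        funext k
        simp [Ne.symm hrl]
      have h2 : (fun k => if r = l then (0 : ℝ) else tdm φ l (x, t) r k)
          = fun k => tdm φ r (x, t) l k := by
        funext k
        simp only [if_neg hrl]
        rw [tdm_symm hφ]
      rw [h1, h2]
      exact det_updateRow_updateRow_swap (mat φ (x, t)) hrl (Pi.single j 1) _
  -- assemble
  rw [hsplit, add_mul]
  rw [Finset.sum_add_distrib, hT1]
  have hsum2 : ∑ r, f (φ (x, t), t) *
      ∑ j, (bmat φ (x, t) r j * (mat φ (x, t)).adjugate j r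
        + vel φ (x, t) j *
          ∑ l, (((mat φ (x, t)).updateRow r (Pi.single j 1)).updateRow l
            (fun k => if l = r then 0 else tdm φ r (x, t) l k)).det)
      = f (φ (x, t), t) * ∑ i, ((mat φ (x, t)).updateRow i (bmat φ (x, t) i)).det := by
    rw [← Finset.mul_sum]
    congr 1
    have hexp : ∀ r : Fin (n + 1),
        ∑ j, (bmat φ (x, t) r j * (mat φ (x, t)).adjugate j r
          + vel φ (x, t) j *
            ∑ l, (((mat φ (x, t)).updateRow r (Pi.single j 1)).updateRow l
              (fun k => if l = r then 0 else tdm φ r (x, t) l k)).det)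
        = (∑ j, bmat φ (x, t) r j * (mat φ (x, t)).adjugate j r)
          + ∑ j, vel φ (x, t) j *
            ∑ l, (((mat φ (x, t)).updateRow r (Pi.single j 1)).updateRow l
              (fun k => if l = r then 0 else tdm φ r (x, t) l k)).det := fun r =>
      Finset.sum_add_distrib
    rw [Finset.sum_congr rfl fun r _ => hexp r, Finset.sum_add_distrib]
    have hzero : ∑ r, ∑ j, vel φ (x, t) j *
        ∑ l, (((mat φ (x, t)).updateRow r (Pi.single j 1)).updateRow l
          (fun k => if l = r then 0 else tdm φ r (x, t) l k)).det = 0 := by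
      rw [Finset.sum_comm]
      refine Finset.sum_eq_zero fun j _ => ?_
      rw [← Finset.mul_sum, hT3 j, mul_zero]
    rw [hzero, add_zero]
    exact Finset.sum_congr rfl fun i _ => (hT2 i).symm
  rw [hsum2]
  ring

end Key

end Reynolds
end

noncomputable section
namespace Reynolds

open MeasureTheory

variable {n : ℕ} {φ : (Fin (n + 1) → ℝ) × ℝ → Fin (n + 1) → ℝ} {f : (Fin (n + 1) → ℝ) × ℝ → ℝ}

section StepC

variable (hφ : ContDiff ℝ 2 φ) (hf : ContDiff ℝ 1 f)
include hφ hf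

lemma continuous_divergence (t : ℝ) :
    Continuous fun x : Fin (n + 1) → ℝ =>
      ∑ r, fderiv ℝ (Ffun φ f t r) x (Pi.single r 1) := by
  refine continuous_finset_sum _ ?_
  intro r _
  have h1 : Continuous (fderiv ℝ (Ffun φ f t r)) :=
    ((contDiff_Ffun hφ hf t r).fderiv_right (m := 0) (by norm_num)).continuous
  exact h1.clm_apply continuous_const

lemma divergence_eq (t : ℝ) :
    (∫ x in Set.Icc (0 : Fin (n + 1) → ℝ) 1,
        ∑ r, fderiv ℝ (Ffun φ f t r) x (Pi.single r 1))
      = ∑ r : Fin (n + 1),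
          ((∫ z in Set.Icc (0 : Fin n → ℝ) 1, Ffun φ f t r (r.insertNth 1 z))
            - ∫ z in Set.Icc (0 : Fin n → ℝ) 1, Ffun φ f t r (r.insertNth 0 z)) := by
  have hle : (0 : Fin (n + 1) → ℝ) ≤ 1 := fun i => zero_le_one
  have h := integral_divergence_of_hasFDerivAt_off_countable'
    (0 : Fin (n + 1) → ℝ) 1 hle (fun r => Ffun φ f t r)
    (fun r x => fderiv ℝ (Ffun φ f t r) x) ∅ Set.countable_empty
    (fun r => ((contDiff_Ffun hφ hf t r).continuous).continuousOn)
    (fun x _ r => (((contDiff_Ffun hφ hf t r).differentiable one_ne_zero) x).hasFDerivAt)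
    ((continuous_divergence hφ hf t).continuousOn.integrableOn_compact isCompact_Icc)
  have hface : ∀ r : Fin (n + 1),
      Set.Icc ((0 : Fin (n + 1) → ℝ) ∘ r.succAbove) ((1 : Fin (n + 1) → ℝ) ∘ r.succAbove)
        = Set.Icc (0 : Fin n → ℝ) 1 := fun r => rfl
  rw [h]
  refine Finset.sum_congr rfl fun r _ => ?_
  rw [hface r]
  rfl

lemma deriv_f_time (q : Fin (n + 1) → ℝ) (t : ℝ) :
    deriv (fun τ' => f (q, τ')) t = fderiv ℝ f (q, t) ((0 : Fin (n + 1) → ℝ), 1) := by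
  have hline : HasDerivAt (fun τ' : ℝ => ((q, τ') : (Fin (n + 1) → ℝ) × ℝ))
      ((0 : Fin (n + 1) → ℝ), (1 : ℝ)) t := (hasDerivAt_const t q).prodMk (hasDerivAt_id t)
  have hdf : HasFDerivAt f (fderiv ℝ f (q, t)) (q, t) :=
    ((hf.differentiable one_ne_zero) (q, t)).hasFDerivAt
  exact (hdf.comp_hasDerivAt t hline).deriv

lemma main_deriv (t : ℝ) :
    HasDerivAt (fun τ => ∫ x in Set.Icc (0 : Fin (n + 1) → ℝ) 1, gfun φ f (x, τ))
      (∫ x in Set.Icc (0 : Fin (n + 1) → ℝ) 1, Gfun φ f (x, t)) t := by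
  obtain ⟨C, hC⟩ := (IsCompact.prod (isCompact_Icc
      (a := (0 : Fin (n + 1) → ℝ)) (b := 1)) (isCompact_Icc (a := t - 1)
      (b := t + 1))).exists_bound_of_continuousOn (continuous_Gfun hφ hf).continuousOn
  have hmeas : ∀ τ : ℝ, AEStronglyMeasurable (fun x => gfun φ f (x, τ))
      (volume.restrict (Set.Icc (0 : Fin (n + 1) → ℝ) 1)) := fun τ =>
    ((continuous_gfun hφ hf).comp (continuous_id.prodMk continuous_const)).aestronglyMeasurable
  have hGmeas : AEStronglyMeasurable (fun x => Gfun φ f (x, t))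
      (volume.restrict (Set.Icc (0 : Fin (n + 1) → ℝ) 1)) :=
    ((continuous_Gfun hφ hf).comp (continuous_id.prodMk continuous_const)).aestronglyMeasurable
  have h := hasDerivAt_integral_of_dominated_loc_of_deriv_le
    (F := fun τ x => gfun φ f (x, τ)) (F' := fun τ x => Gfun φ f (x, τ))
    (x₀ := t) (s := Metric.ball t 1) (bound := fun _ => C)
    (μ := volume.restrict (Set.Icc (0 : Fin (n + 1) → ℝ) 1))
    (Metric.ball_mem_nhds t one_pos) (Filter.Eventually.of_forall hmeas)
    (((continuous_gfun hφ hf).comp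
      (continuous_id.prodMk continuous_const)).continuousOn.integrableOn_compact
        isCompact_Icc)
    hGmeas ?_ ?_ ?_
  · exact h.2
  · refine (ae_restrict_iff' measurableSet_Icc).2 (Filter.Eventually.of_forall ?_)
    intro x hx τ hτ
    have hτ' : τ ∈ Set.Icc (t - 1) (t + 1) := by
      have := Metric.mem_ball.1 hτ
      rw [Real.dist_eq, abs_sub_lt_iff] at this
      constructor <;> linarith
    exact hC (x, τ) ⟨hx, hτ'⟩
  · exact integrableOn_const (isCompact_Icc.measure_lt_top.ne)
  · exact Filter.Eventually.of_forall fun x =>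
      fun τ _ => hasDerivAt_gfun hφ hf x τ

end StepC

end Reynolds
end

noncomputable section
namespace Reynolds

open MeasureTheory

variable {n : ℕ} {φ : (Fin (n + 1) → ℝ) × ℝ → Fin (n + 1) → ℝ} {f : (Fin (n + 1) → ℝ) × ℝ → ℝ}

section Final

variable (hφ : ContDiff ℝ 2 φ) (hf : ContDiff ℝ 1 f)
include hφ hf

lemma face_integrand_eq (t : ℝ) (y : Fin (n + 1) → ℝ) (r : Fin (n + 1)) :
    (∑ j : Fin (n + 1), (-1 : ℝ) ^ ((r : ℕ) + (j : ℕ)) * f (φ (y, t), t) *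
        deriv (fun τ' => φ (y, τ') j) t *
        ((Matrix.of fun i k => fderiv ℝ (fun y' => φ (y', t)) y (Pi.single i 1) k).submatrix
          r.succAbove j.succAbove).det)
      = Ffun φ f t r y := by
  have hF : Ffun φ f t r y = f (φ (y, t), t) * ∑ j : Fin (n + 1), vel φ (y, t) j *
      (mat φ (y, t)).adjugate j r := rfl
  rw [hF, Finset.mul_sum]
  refine Finset.sum_congr rfl fun j _ => ?_
  rw [Reynolds.mat_eq hφ t y, deriv_phi_coord_eq hφ t y j,
    Matrix.adjugate_fin_succ_eq_det_submatrix]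
  ring

lemma continuous_tf_part (t : ℝ) :
    Continuous fun x : Fin (n + 1) → ℝ =>
      fderiv ℝ f (φ (x, t), t) ((0 : Fin (n + 1) → ℝ), 1) * (mat φ (x, t)).det := by
  have hemb : Continuous fun x : Fin (n + 1) → ℝ => ((x, t) : (Fin (n + 1) → ℝ) × ℝ) :=
    continuous_id.prodMk continuous_const
  have h1 : Continuous fun x : Fin (n + 1) → ℝ =>
      fderiv ℝ f (φ (x, t), t) ((0 : Fin (n + 1) → ℝ), 1) := by
    have hdf : Continuous fun x : Fin (n + 1) → ℝ => fderiv ℝ f (φ (x, t), t) :=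
      (hf.fderiv_right (m := 0) (by norm_num)).continuous.comp
        ((hφ.continuous.comp hemb).prodMk continuous_const)
    exact hdf.clm_apply continuous_const
  have h2 : Continuous fun x : Fin (n + 1) → ℝ => (mat φ (x, t)).det := by
    refine (contDiff_det_comp (k := 0) ?_).continuous
    intro i k
    exact contDiff_zero.2 ((contDiff_mat_entry hφ i k).continuous.comp hemb)
  exact h1.mul h2

lemma value_eq (t : ℝ) :
    (∫ x in Set.Icc (0 : Fin (n + 1) → ℝ) 1, Gfun φ f (x, t))
      = (∫ x in Set.Icc (0 : Fin (n + 1) → ℝ) 1,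
          deriv (fun τ' => f (φ (x, t), τ')) t *
            (Matrix.of fun i k =>
              fderiv ℝ (fun y => φ (y, t)) x (Pi.single i 1) k).det)
        + ∑ r : Fin (n + 1), ∑ s : Fin 2, (-1 : ℝ) ^ ((s : ℕ) + 1) *
            ∫ z in Set.Icc (0 : Fin n → ℝ) 1,
              ∑ j : Fin (n + 1), (-1 : ℝ) ^ ((r : ℕ) + (j : ℕ)) *
                f (φ (r.insertNth ((s : ℕ) : ℝ) z, t), t) *
                deriv (fun τ' => φ (r.insertNth ((s : ℕ) : ℝ) z, τ') j) t *
                ((Matrix.of fun i k =>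
                      fderiv ℝ (fun y => φ (y, t)) (r.insertNth ((s : ℕ) : ℝ) z)
                        (Pi.single i 1) k).submatrix
                    r.succAbove j.succAbove).det := by
  have hkey : (fun x => Gfun φ f (x, t))
      = fun x => (fderiv ℝ f (φ (x, t), t) ((0 : Fin (n + 1) → ℝ), 1) * (mat φ (x, t)).det)
        + ∑ r, fderiv ℝ (Ffun φ f t r) x (Pi.single r 1) :=
    funext fun x => key_identity hφ hf t x
  have hint1 : IntegrableOn (fun x : Fin (n + 1) → ℝ =>
      fderiv ℝ f (φ (x, t), t) ((0 : Fin (n + 1) → ℝ), 1) * (mat φ (x, t)).det)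
      (Set.Icc (0 : Fin (n + 1) → ℝ) 1) :=
    (continuous_tf_part hφ hf t).continuousOn.integrableOn_compact isCompact_Icc
  have hint2 : IntegrableOn (fun x : Fin (n + 1) → ℝ =>
      ∑ r, fderiv ℝ (Ffun φ f t r) x (Pi.single r 1))
      (Set.Icc (0 : Fin (n + 1) → ℝ) 1) :=
    (continuous_divergence hφ hf t).continuousOn.integrableOn_compact isCompact_Icc
  have hsplit : (∫ x in Set.Icc (0 : Fin (n + 1) → ℝ) 1, Gfun φ f (x, t))
      = (∫ x in Set.Icc (0 : Fin (n + 1) → ℝ) 1,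
          fderiv ℝ f (φ (x, t), t) ((0 : Fin (n + 1) → ℝ), 1) * (mat φ (x, t)).det)
        + ∫ x in Set.Icc (0 : Fin (n + 1) → ℝ) 1,
            ∑ r, fderiv ℝ (Ffun φ f t r) x (Pi.single r 1) := by
    rw [show (fun x => Gfun φ f (x, t))
        = fun x => (fderiv ℝ f (φ (x, t), t) ((0 : Fin (n + 1) → ℝ), 1) * (mat φ (x, t)).det)
          + ∑ r, fderiv ℝ (Ffun φ f t r) x (Pi.single r 1) from hkey]
    exact integral_add hint1 hint2
  rw [hsplit, divergence_eq hφ hf t]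
  congr 1
  · refine congrArg _ ?_
    funext x
    rw [deriv_f_time hφ hf (φ (x, t)) t, Reynolds.mat_eq hφ t x]
  · refine Finset.sum_congr rfl fun r _ => ?_
    have h0 : (∫ z in Set.Icc (0 : Fin n → ℝ) 1,
        ∑ j : Fin (n + 1), (-1 : ℝ) ^ ((r : ℕ) + (j : ℕ)) *
          f (φ (r.insertNth (0 : ℝ) z, t), t) *
          deriv (fun τ' => φ (r.insertNth (0 : ℝ) z, τ') j) t *
          ((Matrix.of fun i k =>
                fderiv ℝ (fun y => φ (y, t)) (r.insertNth (0 : ℝ) z)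
                  (Pi.single i 1) k).submatrix r.succAbove j.succAbove).det)
        = ∫ z in Set.Icc (0 : Fin n → ℝ) 1, Ffun φ f t r (r.insertNth 0 z) := by
      refine congrArg _ ?_
      funext z
      exact face_integrand_eq hφ hf t (r.insertNth 0 z) r
    have h1 : (∫ z in Set.Icc (0 : Fin n → ℝ) 1,
        ∑ j : Fin (n + 1), (-1 : ℝ) ^ ((r : ℕ) + (j : ℕ)) *
          f (φ (r.insertNth (1 : ℝ) z, t), t) *
          deriv (fun τ' => φ (r.insertNth (1 : ℝ) z, τ') j) t *
          ((Matrix.of fun i k =>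
                fderiv ℝ (fun y => φ (y, t)) (r.insertNth (1 : ℝ) z)
                  (Pi.single i 1) k).submatrix r.succAbove j.succAbove).det)
        = ∫ z in Set.Icc (0 : Fin n → ℝ) 1, Ffun φ f t r (r.insertNth 1 z) := by
      refine congrArg _ ?_
      funext z
      exact face_integrand_eq hφ hf t (r.insertNth 1 z) r
    rw [Fin.sum_univ_two]
    norm_num
    rw [h0, h1]
    ring

end Final

end Reynolds
end


end ReynoldsAux

/-- **Reynolds transport theorem for (possibly self-intersecting) cycles
(the paper's Theorem 3.15, written in face-sum form).**
Let `φ : ℝ^m × ℝ → ℝ^m` (here `m = n+1 ≥ 1`) be `C²` jointly in space and time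
and `f : ℝ^m × ℝ → ℝ` be `C¹`.  With `A (x,t) i k = ∂φ_k/∂x_i (x,t)` and
`K i j (x,t)` the `(i,j)` minor of `A (x,t)`, the function
`t ↦ ∫_{[0,1]^m} f(φ(x,t), t) · det A(x,t) dx` is differentiable, with
derivative the cube integral of `(∂f/∂t)(φ(x,t),t) · det A(x,t)` plus the
face-sum boundary term `∮_{S(t)} f (∂_t φ) · n` over the moving cycle
`S(t) = φ(∂[0,1]^m, t)`. -/
theorem reynolds_transport_for_cycles
    (n : ℕ)
    (φ : (Fin (n + 1) → ℝ) × ℝ → (Fin (n + 1) → ℝ))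
    (hφ : ContDiff ℝ 2 φ)
    (f : (Fin (n + 1) → ℝ) × ℝ → ℝ)
    (hf : ContDiff ℝ 1 f) (t : ℝ) :
    HasDerivAt
      (fun τ => ∫ x in Set.Icc (0 : Fin (n + 1) → ℝ) 1,
        f (φ (x, τ), τ) *
          (Matrix.of fun i k =>
            fderiv ℝ (fun y => φ (y, τ)) x (Pi.single i 1) k).det)
      ((∫ x in Set.Icc (0 : Fin (n + 1) → ℝ) 1,
          deriv (fun τ' => f (φ (x, t), τ')) t *
            (Matrix.of fun i k =>
              fderiv ℝ (fun y => φ (y, t)) x (Pi.single i 1) k).det)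
        + ∑ r : Fin (n + 1), ∑ s : Fin 2, (-1 : ℝ) ^ ((s : ℕ) + 1) *
            ∫ z in Set.Icc (0 : Fin n → ℝ) 1,
              ∑ j : Fin (n + 1), (-1 : ℝ) ^ ((r : ℕ) + (j : ℕ)) *
                f (φ (r.insertNth ((s : ℕ) : ℝ) z, t), t) *
                deriv (fun τ' => φ (r.insertNth ((s : ℕ) : ℝ) z, τ') j) t *
                ((Matrix.of fun i k =>
                      fderiv ℝ (fun y => φ (y, t)) (r.insertNth ((s : ℕ) : ℝ) z)
                        (Pi.single i 1) k).submatrix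
                    r.succAbove j.succAbove).det)
      t := by
  have hmain := Reynolds.main_deriv hφ hf t
  have hfun : (fun τ => ∫ x in Set.Icc (0 : Fin (n + 1) → ℝ) 1,
      f (φ (x, τ), τ) *
        (Matrix.of fun i k =>
          fderiv ℝ (fun y => φ (y, τ)) x (Pi.single i 1) k).det)
      = fun τ => ∫ x in Set.Icc (0 : Fin (n + 1) → ℝ) 1, Reynolds.gfun φ f (x, τ) := by
    funext τ
    refine congrArg _ ?_
    funext x
    rw [Reynolds.mat_eq hφ τ x]
    rfl
  rw [hfun, ← Reynolds.value_eq hφ hf t]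
  exact hmain
end

section
/- Exactness of the tensor-product quadrature for Lagrangian flux integrals: fix integers q ≥ 0 and κ ≥ 1 and a real number ξ. Let f(x,y,z) be a real polynomial of total degree at most q and set F(x,y,z) = ∫_ξ^x f(s,y,z) ds. Let 0 = u₀ < u₁ < ⋯ < u_ι = 1 and 0 = v₀ < v₁ < ⋯ < v_ι = 1 be knot sequences, and let S(u,v) = (x(u,v), y(u,v), z(u,v)) be a map on [0,1]² each of whose three components, when restricted to any cell [u_{l₁−1}, u_{l₁}] × [v_{l₂−1}, v_{l₂}], is a polynomial of degree at most κ−1 in u and at most κ−1 in v. For each p ∈ {n, m, h}, let λ₁^p, …, λ_p^p ∈ [−1,1] and ω₁^p, …, ω_p^p ∈ ℝ be nodes and weights such that Σ_{i=1}^{p} ω_i^p P(λ_i^p) = ∫_{−1}^{1} P(λ) dλ for every polynomial P of degree at most 2p−1, and suppose n ≥ ⌈(q+1)/2⌉ and m, h ≥ ⌈(q+3)(κ−1)/2⌉. Define, for l₁, l₂ ∈ {1,…,ι}, i ∈ {1,…,n}, j ∈ {1,…,m}, k ∈ {1,…,h}: u_{l₁j} = ((u_{l₁} − u_{l₁−1})/2)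 λ_j^m + (u_{l₁} + u_{l₁−1})/2, v_{l₂k} = ((v_{l₂} − v_{l₂−1})/2) λ_k^h + (v_{l₂} + v_{l₂−1})/2, x_{l₁l₂ijk} = ((x(u_{l₁j}, v_{l₂k}) − ξ)/2) λ_i^n + (x(u_{l₁j}, v_{l₂k}) + ξ)/2, y_{l₁l₂jk} = y(u_{l₁j}, v_{l₂k}), z_{l₁l₂jk} = z(u_{l₁j}, v_{l₂k}), and w_{l₁l₂ijk} = −ω_i^n ω_j^m ω_k^h · ((u_{l₁} − u_{l₁−1})/2) · ((v_{l₂} − v_{l₂−1})/2) · ((x(u_{l₁j}, v_{l₂k}) − ξ)/2) · J_{yz}(u_{l₁j}, v_{l₂k}), where J_{yz} = (∂y/∂u)(∂z/∂v) − (∂y/∂v)(∂z/∂u) computed on the corresponding cell. Then Σ_{l₁,l₂=1}^{ι} Σ_{i=1}^{n} Σ_{j=1}^{m} Σ_{k=1}^{h} w_{l₁l₂ijk} f(x_{l₁l₂ijk}, y_{l₁l₂jk}, z_{l₁l₂jk}) = −∫₀¹∫₀¹ F(S(u,v)) J_{yz}(u,v) du dv; i.e., the quadrature rule computes the surface flux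 integral I_S(f) = ∫_S F dy∧dz exactly. -/
open MeasureTheory intervalIntegral

open MvPolynomial Polynomial

private lemma degreeOf_monomial_le' {σ : Type*} (s : σ →₀ ℕ) (a : ℝ) (j : σ) :
    degreeOf j (MvPolynomial.monomial s a) ≤ s j := by
  rw [degreeOf_le_iff]
  intro d hd
  classical
  rw [MvPolynomial.support_monomial] at hd
  split_ifs at hd with h
  · simp at hd
  · simp only [Finset.mem_singleton] at hd; subst hd; exact le_rfl

private lemma pderiv_as_sum {σ : Type*} [DecidableEq σ] (p : MvPolynomial σ ℝ) (i : σ) :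
    pderiv i p = ∑ d ∈ p.support,
      MvPolynomial.monomial (d - Finsupp.single i 1) (coeff d p * (d i : ℝ)) := by
  conv_lhs => rw [p.as_sum]
  rw [map_sum]
  refine Finset.sum_congr rfl fun d _ => ?_
  rw [pderiv_monomial]

private lemma degreeOf_pderiv_le_self {σ : Type*} [DecidableEq σ] (p : MvPolynomial σ ℝ) (i j : σ) :
    degreeOf j (pderiv i p) ≤ degreeOf j p := by
  rw [pderiv_as_sum]
  refine le_trans (degreeOf_sum_le _ _ _) ?_
  rw [Finset.sup_le_iff]
  intro d hd
  refine le_trans (degreeOf_monomial_le' _ _ _) ?_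
  refine le_trans ?_ (monomial_le_degreeOf j hd)
  simp only [Finsupp.tsub_apply]
  exact Nat.sub_le _ _

private lemma degreeOf_pderiv_le_sub {σ : Type*} [DecidableEq σ] (p : MvPolynomial σ ℝ) (i : σ) :
    degreeOf i (pderiv i p) ≤ degreeOf i p - 1 := by
  rw [pderiv_as_sum]
  refine le_trans (degreeOf_sum_le _ _ _) ?_
  rw [Finset.sup_le_iff]
  intro d hd
  refine le_trans (degreeOf_monomial_le' _ _ _) ?_
  have h2 := monomial_le_degreeOf i hd
  simp only [Finsupp.tsub_apply, Finsupp.single_eq_same]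
  omega

private lemma pderiv_eq_zero_of_degreeOf' {σ : Type*} [DecidableEq σ] (p : MvPolynomial σ ℝ) (i : σ)
    (h : degreeOf i p = 0) : pderiv i p = 0 := by
  rw [pderiv_as_sum]
  refine Finset.sum_eq_zero fun d hd => ?_
  have h2 := monomial_le_degreeOf i hd
  rw [h, Nat.le_zero] at h2
  rw [h2]
  simp

private lemma natDegree_aeval_le {k : ℕ} (g : Fin k → Polynomial ℝ) (p : MvPolynomial (Fin k) ℝ)
    (N : ℕ) (hd : ∀ d ∈ p.support, (∑ i, d i * (g i).natDegree) ≤ N) :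
    (MvPolynomial.aeval g p).natDegree ≤ N := by
  rw [MvPolynomial.aeval_def, eval₂_eq]
  refine le_trans (Polynomial.natDegree_sum_le _ _) ?_
  rw [Finset.fold_max_le]
  refine ⟨Nat.zero_le _, fun d hd' => ?_⟩
  simp only [Function.comp_apply]
  refine le_trans (natDegree_mul_le) ?_
  have h1 : (algebraMap ℝ (Polynomial ℝ) (coeff d p)).natDegree = 0 := natDegree_C _
  rw [h1, zero_add]
  refine le_trans (Polynomial.natDegree_prod_le _ _) ?_
  refine le_trans ?_ (hd d hd')
  refine le_trans (Finset.sum_le_sum fun i _ => Polynomial.natDegree_pow_le) ?_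
  exact Finset.sum_le_sum_of_subset (Finset.subset_univ _)

private lemma eval_aeval {k : ℕ} (g : Fin k → Polynomial ℝ) (p : MvPolynomial (Fin k) ℝ) (t : ℝ) :
    (MvPolynomial.aeval g p).eval t = MvPolynomial.eval (fun i => (g i).eval t) p := by
  rw [MvPolynomial.aeval_def]
  have := MvPolynomial.eval₂_comp_left (Polynomial.evalRingHom t)
    (algebraMap ℝ (Polynomial ℝ)) g p
  simp only [Polynomial.coe_evalRingHom] at this
  rw [this]
  have h2 : (Polynomial.evalRingHom t).comp (algebraMap ℝ (Polynomial ℝ)) = RingHom.id ℝ := by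
    ext x; simp
  rw [h2]
  rfl

private lemma derivative_aeval (g : Fin 2 → Polynomial ℝ) (p : MvPolynomial (Fin 2) ℝ) :
    derivative (MvPolynomial.aeval g p)
      = MvPolynomial.aeval g (pderiv 0 p) * derivative (g 0)
        + MvPolynomial.aeval g (pderiv 1 p) * derivative (g 1) := by
  induction p using MvPolynomial.induction_on with
  | C a => simp
  | add p q hp hq => simp only [map_add, derivative_add, hp, hq]; ring
  | mul_X p i hp =>
      have : ∀ j : Fin 2, pderiv j (p * MvPolynomial.X i)
          = pderiv j p * MvPolynomial.X i + p * pderiv j (MvPolynomial.X i) := fun j => pderiv_mul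
      simp only [map_mul, derivative_mul, this, map_add, MvPolynomial.aeval_X, pderiv_X]
      fin_cases i <;> simp [hp] <;> ring

private lemma deriv_eval_fst (p : MvPolynomial (Fin 2) ℝ) (b a : ℝ) :
    deriv (fun a' => MvPolynomial.eval ![a', b] p) a = MvPolynomial.eval ![a, b] (pderiv 0 p) := by
  have hv : ∀ t : ℝ, (fun i => (![Polynomial.X, Polynomial.C b] i).eval t) = ![t, b] := by
    intro t; funext i; fin_cases i <;> simp
  have key : (fun a' => MvPolynomial.eval ![a', b] p)
      = fun a' => (MvPolynomial.aeval ![Polynomial.X, Polynomial.C b] p).eval a' := by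
    funext a'; rw [eval_aeval, hv]
  rw [key, Polynomial.deriv, derivative_aeval]
  simp only [Matrix.cons_val_zero, Matrix.cons_val_one, Matrix.head_cons, derivative_X,
    derivative_C, mul_one, mul_zero, add_zero, Polynomial.eval_add, Polynomial.eval_mul,
    Polynomial.eval_one, Polynomial.eval_zero, eval_aeval, hv]

private lemma deriv_eval_snd (p : MvPolynomial (Fin 2) ℝ) (a b : ℝ) :
    deriv (fun b' => MvPolynomial.eval ![a, b'] p) b = MvPolynomial.eval ![a, b] (pderiv 1 p) := by
  have hv : ∀ t : ℝ, (fun i => (![Polynomial.C a, Polynomial.X] i).eval t) = ![a, t] := by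
    intro t; funext i; fin_cases i <;> simp
  have key : (fun b' => MvPolynomial.eval ![a, b'] p)
      = fun b' => (MvPolynomial.aeval ![Polynomial.C a, Polynomial.X] p).eval b' := by
    funext b'; rw [eval_aeval, hv]
  rw [key, Polynomial.deriv, derivative_aeval]
  simp only [Matrix.cons_val_zero, Matrix.cons_val_one, Matrix.head_cons, derivative_X,
    derivative_C, mul_one, mul_zero, add_zero, zero_add, Polynomial.eval_add, Polynomial.eval_mul,
    Polynomial.eval_one, Polynomial.eval_zero, eval_aeval, hv]

private lemma integral_mv_eval (f : MvPolynomial (Fin 3) ℝ) (ξ x y z : ℝ) :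
    (∫ s in ξ..x, MvPolynomial.eval ![s, y, z] f)
      = ∑ d ∈ f.support, coeff d f
          * ((x ^ (d 0 + 1) - ξ ^ (d 0 + 1)) / ((d 0 : ℝ) + 1)) * (y ^ d 1 * z ^ d 2) := by
  have hexp : ∀ s : ℝ, MvPolynomial.eval ![s, y, z] f
      = ∑ d ∈ f.support, (coeff d f * (y ^ d 1 * z ^ d 2)) * s ^ d 0 := by
    intro s
    rw [MvPolynomial.eval_eq']
    refine Finset.sum_congr rfl fun d _ => ?_
    rw [Fin.prod_univ_three]
    simp only [Matrix.cons_val_zero, Matrix.cons_val_one, Matrix.head_cons,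
      Matrix.cons_val_two, Matrix.tail_cons]
    ring
  simp only [hexp]
  rw [intervalIntegral.integral_finset_sum]
  · refine Finset.sum_congr rfl fun d _ => ?_
    rw [intervalIntegral.integral_const_mul, integral_pow]
    ring
  · intro d _
    exact (Continuous.intervalIntegrable (by continuity) _ _)

private lemma eval_A (f : MvPolynomial (Fin 3) ℝ) (ξ : ℝ) (P Q R : MvPolynomial (Fin 2) ℝ)
    (w : Fin 2 → ℝ) :
    MvPolynomial.eval w (∑ d ∈ f.support,
        MvPolynomial.C (coeff d f / ((d 0 : ℝ) + 1))
          * (P ^ (d 0 + 1) - MvPolynomial.C (ξ ^ (d 0 + 1))) * Q ^ d 1 * R ^ d 2)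
      = ∫ s in ξ..(MvPolynomial.eval w P),
          MvPolynomial.eval ![s, MvPolynomial.eval w Q, MvPolynomial.eval w R] f := by
  rw [integral_mv_eval, map_sum]
  refine Finset.sum_congr rfl fun d _ => ?_
  simp only [map_mul, MvPolynomial.eval_C, map_pow, map_sub]
  have hne : ((d 0 : ℝ) + 1) ≠ 0 := by positivity
  field_simp

private lemma quad_affine (p : ℕ) (lam w : Fin p → ℝ)
    (hex : ∀ P : Polynomial ℝ, P.natDegree < 2 * p →
      ∑ i, w i * P.eval (lam i) = ∫ t in (-1 : ℝ)..1, P.eval t)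
    (P : Polynomial ℝ) (hP : P.natDegree < 2 * p) (c e : ℝ) :
    ∑ i, w i * P.eval (c * lam i + e) = ∫ t in (-1 : ℝ)..1, P.eval (c * t + e) := by
  have hL : (Polynomial.C c * Polynomial.X + Polynomial.C e).natDegree ≤ 1 := by
    refine le_trans (natDegree_add_le _ _) ?_
    simp only [natDegree_C, max_le_iff]
    constructor
    · exact le_trans (natDegree_mul_le) (by simp)
    · omega
  have hcomp : (P.comp (Polynomial.C c * Polynomial.X + Polynomial.C e)).natDegree < 2 * p := by
    refine lt_of_le_of_lt (le_trans (natDegree_comp_le) ?_) hP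
    calc P.natDegree * (Polynomial.C c * Polynomial.X + Polynomial.C e).natDegree
        ≤ P.natDegree * 1 := Nat.mul_le_mul_left _ hL
      _ = P.natDegree := by ring
  have := hex _ hcomp
  simpa only [Polynomial.eval_comp, Polynomial.eval_add, Polynomial.eval_mul,
    Polynomial.eval_C, Polynomial.eval_X] using this

private lemma xquad (n q : ℕ) (lamN wN : Fin n → ℝ)
    (hexactN : ∀ P : Polynomial ℝ, P.natDegree < 2 * n →
      ∑ i, wN i * P.eval (lamN i) = ∫ t in (-1 : ℝ)..1, P.eval t)
    (f : MvPolynomial (Fin 3) ℝ) (hf : f.totalDegree ≤ q) (hqn : q < 2 * n)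
    (ξ xv yv zv : ℝ) :
    ∑ i, wN i * (((xv - ξ) / 2)
        * MvPolynomial.eval ![(xv - ξ) / 2 * lamN i + (xv + ξ) / 2, yv, zv] f)
      = ∫ s in ξ..xv, MvPolynomial.eval ![s, yv, zv] f := by
  set c := (xv - ξ) / 2 with hc
  set e := (xv + ξ) / 2 with he
  set P : Polynomial ℝ := Polynomial.C c * MvPolynomial.aeval
      ![Polynomial.C c * Polynomial.X + Polynomial.C e, Polynomial.C yv, Polynomial.C zv] f
    with hPdef
  have hvec : ∀ t : ℝ, (fun i => (![Polynomial.C c * Polynomial.X + Polynomial.C e,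
      Polynomial.C yv, Polynomial.C zv] i).eval t) = ![c * t + e, yv, zv] := by
    intro t; funext i; fin_cases i <;> simp
  have hPeval : ∀ t : ℝ, P.eval t = c * MvPolynomial.eval ![c * t + e, yv, zv] f := by
    intro t
    rw [hPdef, Polynomial.eval_mul, Polynomial.eval_C, eval_aeval, hvec]
  have hPdeg : P.natDegree < 2 * n := by
    refine lt_of_le_of_lt (le_trans natDegree_mul_le ?_) (lt_of_le_of_lt hf hqn)
    rw [natDegree_C, zero_add]
    refine natDegree_aeval_le _ _ _ fun d hd => ?_
    have h1 : (∑ i, d i * (![Polynomial.C c * Polynomial.X + Polynomial.C e,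
        Polynomial.C yv, Polynomial.C zv] i).natDegree) ≤ d 0 := by
      rw [Fin.sum_univ_three]
      simp only [Matrix.cons_val_zero, Matrix.cons_val_one, Matrix.head_cons,
        Matrix.cons_val_two, Matrix.tail_cons, natDegree_C, mul_zero, add_zero]
      have : (Polynomial.C c * Polynomial.X + Polynomial.C e).natDegree ≤ 1 := by
        refine le_trans (natDegree_add_le _ _) ?_
        simp only [natDegree_C, max_le_iff]
        exact ⟨le_trans (natDegree_mul_le) (by simp), by omega⟩
      calc d 0 * (Polynomial.C c * Polynomial.X + Polynomial.C e).natDegree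
          ≤ d 0 * 1 := Nat.mul_le_mul_left _ this
        _ = d 0 := by ring
    refine le_trans h1 ?_
    have := MvPolynomial.le_totalDegree hd
    rw [Finsupp.sum_fintype _ _ (fun _ => rfl), Fin.sum_univ_three] at this
    omega
  have hsum := hexactN P hPdeg
  simp only [hPeval] at hsum
  rw [hsum]
  by_cases hc0 : c = 0
  · have hxv : xv = ξ := by
      have : xv - ξ = 0 := by
        have := hc0; rw [hc] at this; linarith
      linarith
    simp [hc0, hxv]
  · rw [intervalIntegral.integral_const_mul,
      intervalIntegral.integral_comp_mul_add (fun s => MvPolynomial.eval ![s, yv, zv] f) hc0 e]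
    have h1 : c * -1 + e = ξ := by rw [hc, he]; ring
    have h2 : c * 1 + e = xv := by rw [hc, he]; ring
    rw [h1, h2, smul_eq_mul, ← mul_assoc, mul_inv_cancel₀ hc0, one_mul]

private lemma integral_eval_expand (Φ : MvPolynomial (Fin 2) ℝ) (a c e p r : ℝ) :
    (∫ t in p..r, MvPolynomial.eval ![a, c * t + e] Φ)
      = ∑ d ∈ Φ.support, coeff d Φ * a ^ d 0 * ∫ t in p..r, (c * t + e) ^ d 1 := by
  have hexp : ∀ t : ℝ, MvPolynomial.eval ![a, c * t + e] Φ
      = ∑ d ∈ Φ.support, (coeff d Φ * a ^ d 0) * (c * t + e) ^ d 1 := by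
    intro t
    rw [MvPolynomial.eval_eq']
    refine Finset.sum_congr rfl fun d _ => ?_
    rw [Fin.prod_univ_two]
    simp only [Matrix.cons_val_zero, Matrix.cons_val_one, Matrix.head_cons]
    ring
  simp only [hexp]
  rw [intervalIntegral.integral_finset_sum]
  · exact Finset.sum_congr rfl fun d _ => intervalIntegral.integral_const_mul _ _
  · intro d _
    exact Continuous.intervalIntegrable (by continuity) _ _

private lemma eval_aeval_CX (Φ : MvPolynomial (Fin 2) ℝ) (a t : ℝ) (L : Polynomial ℝ) :
    (MvPolynomial.aeval ![Polynomial.C a, L] Φ).eval t = MvPolynomial.eval ![a, L.eval t] Φ := by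
  rw [eval_aeval]
  have : (fun i => Polynomial.eval t (![Polynomial.C a, L] i)) = ![a, L.eval t] := by
    funext i; fin_cases i <;> simp
  rw [this]

private lemma natDegree_aeval_CX (Φ : MvPolynomial (Fin 2) ℝ) (a : ℝ) :
    (MvPolynomial.aeval ![Polynomial.C a, Polynomial.X] Φ).natDegree ≤ Φ.degreeOf 1 := by
  refine natDegree_aeval_le _ _ _ fun d hd => ?_
  rw [Fin.sum_univ_two]
  simp only [Matrix.cons_val_zero, Matrix.cons_val_one, Matrix.head_cons, natDegree_C,
    natDegree_X, mul_zero, mul_one, zero_add]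
  exact monomial_le_degreeOf 1 hd

private lemma cell_quad (m h : ℕ) (lamM wM : Fin m → ℝ) (lamH wH : Fin h → ℝ)
    (hexactM : ∀ P : Polynomial ℝ, P.natDegree < 2 * m →
      ∑ j, wM j * P.eval (lamM j) = ∫ t in (-1 : ℝ)..1, P.eval t)
    (hexactH : ∀ P : Polynomial ℝ, P.natDegree < 2 * h →
      ∑ k, wH k * P.eval (lamH k) = ∫ t in (-1 : ℝ)..1, P.eval t)
    (Φ : MvPolynomial (Fin 2) ℝ) (hdm : Φ.degreeOf 0 < 2 * m) (hdh : Φ.degreeOf 1 < 2 * h)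
    (ua ub va vb : ℝ) (hun : ua < ub) (hvn : va < vb) :
    ∑ j, ∑ k, wM j * wH k * ((ub - ua) / 2) * ((vb - va) / 2)
        * MvPolynomial.eval ![(ub - ua) / 2 * lamM j + (ub + ua) / 2,
            (vb - va) / 2 * lamH k + (vb + va) / 2] Φ
      = ∫ a in ua..ub, ∫ b in va..vb, MvPolynomial.eval ![a, b] Φ := by
  set cu := (ub - ua) / 2 with hcu
  set eu := (ub + ua) / 2 with heu
  set cv := (vb - va) / 2 with hcv
  set ev := (vb + va) / 2 with hev
  have hcu0 : cu ≠ 0 := by rw [hcu]; intro hx; nlinarith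
  have hcv0 : cv ≠ 0 := by rw [hcv]; intro hx; nlinarith
  -- step 1: inner quadrature over k
  have step1 : ∀ a : ℝ, ∑ k, wH k * MvPolynomial.eval ![a, cv * lamH k + ev] Φ
      = ∫ t in (-1 : ℝ)..1, MvPolynomial.eval ![a, cv * t + ev] Φ := by
    intro a
    have hdeg : (MvPolynomial.aeval ![Polynomial.C a, Polynomial.X] Φ).natDegree < 2 * h :=
      lt_of_le_of_lt (natDegree_aeval_CX Φ a) hdh
    have := quad_affine h lamH wH hexactH _ hdeg cv ev
    simpa only [eval_aeval_CX, Polynomial.eval_X] using this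
  -- step 2: the j-polynomial R
  set R : Polynomial ℝ := ∑ d ∈ Φ.support,
      Polynomial.C (coeff d Φ * ∫ t in (-1 : ℝ)..1, (cv * t + ev) ^ d 1) * Polynomial.X ^ d 0
    with hRdef
  have hReval : ∀ a : ℝ, R.eval a = ∫ t in (-1 : ℝ)..1, MvPolynomial.eval ![a, cv * t + ev] Φ := by
    intro a
    rw [integral_eval_expand, hRdef]
    rw [Polynomial.eval_finset_sum]
    refine Finset.sum_congr rfl fun d _ => ?_
    simp only [Polynomial.eval_mul, Polynomial.eval_C, Polynomial.eval_pow, Polynomial.eval_X]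
    ring
  have hRdeg : R.natDegree < 2 * m := by
    refine lt_of_le_of_lt ?_ hdm
    rw [hRdef]
    refine le_trans (Polynomial.natDegree_sum_le _ _) ?_
    rw [Finset.fold_max_le]
    refine ⟨Nat.zero_le _, fun d hd => ?_⟩
    simp only [Function.comp_apply]
    refine le_trans natDegree_mul_le ?_
    rw [natDegree_C, zero_add]
    exact le_trans (natDegree_X_pow_le _) (monomial_le_degreeOf 0 hd)
  -- step 3: outer quadrature over j
  have step3 : ∑ j, wM j * R.eval (cu * lamM j + eu)
      = ∫ s in (-1 : ℝ)..1, R.eval (cu * s + eu) :=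
    quad_affine m lamM wM hexactM R hRdeg cu eu
  -- step 4: change of variables
  have hinner : ∀ a : ℝ, (∫ t in (-1 : ℝ)..1, MvPolynomial.eval ![a, cv * t + ev] Φ)
      = cv⁻¹ * ∫ b in va..vb, MvPolynomial.eval ![a, b] Φ := by
    intro a
    rw [intervalIntegral.integral_comp_mul_add (fun b => MvPolynomial.eval ![a, b] Φ) hcv0 ev]
    have h1 : cv * -1 + ev = va := by rw [hcv, hev]; ring
    have h2 : cv * 1 + ev = vb := by rw [hcv, hev]; ring
    rw [h1, h2, smul_eq_mul]
  have houter : (∫ s in (-1 : ℝ)..1, R.eval (cu * s + eu))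
      = cu⁻¹ * ∫ a in ua..ub, R.eval a := by
    rw [intervalIntegral.integral_comp_mul_add (fun a => R.eval a) hcu0 eu]
    have h1 : cu * -1 + eu = ua := by rw [hcu, heu]; ring
    have h2 : cu * 1 + eu = ub := by rw [hcu, heu]; ring
    rw [h1, h2, smul_eq_mul]
  -- assemble
  have lhs_eq : ∑ j, ∑ k, wM j * wH k * cu * cv
        * MvPolynomial.eval ![cu * lamM j + eu, cv * lamH k + ev] Φ
      = (cu * cv) * ∑ j, wM j * R.eval (cu * lamM j + eu) := by
    rw [Finset.mul_sum]
    refine Finset.sum_congr rfl fun j _ => ?_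
    rw [hReval, ← step1, Finset.mul_sum, Finset.mul_sum]
    refine Finset.sum_congr rfl fun k _ => ?_
    ring
  rw [lhs_eq, step3, houter]
  have hRint : (∫ a in ua..ub, R.eval a)
      = cv⁻¹ * ∫ a in ua..ub, ∫ b in va..vb, MvPolynomial.eval ![a, b] Φ := by
    rw [← intervalIntegral.integral_const_mul]
    refine intervalIntegral.integral_congr fun a _ => ?_
    rw [hReval, hinner]
  rw [hRint]
  field_simp

private lemma integral_eval_expand' (Φ : MvPolynomial (Fin 2) ℝ) (a p r : ℝ) :
    (∫ t in p..r, MvPolynomial.eval ![a, t] Φ)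
      = ∑ d ∈ Φ.support, coeff d Φ * a ^ d 0 * ∫ t in p..r, t ^ d 1 := by
  have h := integral_eval_expand Φ a 1 0 p r
  simpa only [one_mul, add_zero] using h

private lemma cont_eval_snd (Φ : MvPolynomial (Fin 2) ℝ) (a : ℝ) :
    Continuous (fun b => MvPolynomial.eval ![a, b] Φ) := by
  have : (fun b => MvPolynomial.eval ![a, b] Φ)
      = fun b => (MvPolynomial.aeval ![Polynomial.C a, Polynomial.X] Φ).eval b := by
    funext b; rw [eval_aeval_CX]; simp
  rw [this]
  exact (MvPolynomial.aeval ![Polynomial.C a, Polynomial.X] Φ).continuous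

private lemma cont_param_integral (Φ : MvPolynomial (Fin 2) ℝ) (p r : ℝ) :
    Continuous (fun a => ∫ t in p..r, MvPolynomial.eval ![a, t] Φ) := by
  have : (fun a => ∫ t in p..r, MvPolynomial.eval ![a, t] Φ)
      = fun a => ∑ d ∈ Φ.support, coeff d Φ * a ^ d 0 * ∫ t in p..r, t ^ d 1 := by
    funext a; exact integral_eval_expand' Φ a p r
  rw [this]
  exact continuous_finset_sum _ fun d _ => by continuity

private noncomputable def Apoly (f : MvPolynomial (Fin 3) ℝ) (ξ : ℝ)
    (P Q R : MvPolynomial (Fin 2) ℝ) : MvPolynomial (Fin 2) ℝ :=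
  ∑ d ∈ f.support, MvPolynomial.C (coeff d f / ((d 0 : ℝ) + 1))
    * (P ^ (d 0 + 1) - MvPolynomial.C (ξ ^ (d 0 + 1))) * Q ^ d 1 * R ^ d 2

private noncomputable def Jpoly (Q R : MvPolynomial (Fin 2) ℝ) : MvPolynomial (Fin 2) ℝ :=
  pderiv 0 Q * pderiv 1 R - pderiv 1 Q * pderiv 0 R

private noncomputable def Phi (f : MvPolynomial (Fin 3) ℝ) (ξ : ℝ)
    (P Q R : MvPolynomial (Fin 2) ℝ) : MvPolynomial (Fin 2) ℝ :=
  Apoly f ξ P Q R * Jpoly Q R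

private lemma eval_Phi (f : MvPolynomial (Fin 3) ℝ) (ξ : ℝ) (P Q R : MvPolynomial (Fin 2) ℝ)
    (w : Fin 2 → ℝ) :
    MvPolynomial.eval w (Phi f ξ P Q R)
      = (∫ s in ξ..(MvPolynomial.eval w P),
          MvPolynomial.eval ![s, MvPolynomial.eval w Q, MvPolynomial.eval w R] f)
        * (MvPolynomial.eval w (pderiv 0 Q) * MvPolynomial.eval w (pderiv 1 R)
          - MvPolynomial.eval w (pderiv 1 Q) * MvPolynomial.eval w (pderiv 0 R)) := by
  unfold Phi Jpoly
  rw [map_mul]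
  congr 1
  · exact eval_A f ξ P Q R w
  · rw [map_sub, map_mul, map_mul]

private lemma degApoly {f : MvPolynomial (Fin 3) ℝ} {q : ℕ} (ξ : ℝ) {i : Fin 2} {k : ℕ}
    (hf : f.totalDegree ≤ q) (P Q R : MvPolynomial (Fin 2) ℝ)
    (hP : degreeOf i P ≤ k) (hQ : degreeOf i Q ≤ k) (hR : degreeOf i R ≤ k) :
    degreeOf i (Apoly f ξ P Q R) ≤ (q + 1) * k := by
  unfold Apoly
  refine le_trans (degreeOf_sum_le _ _ _) ?_
  rw [Finset.sup_le_iff]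
  intro d hd
  have hdq : d 0 + d 1 + d 2 ≤ q := by
    have h1 := MvPolynomial.le_totalDegree hd
    rw [Finsupp.sum_fintype _ _ (fun _ => rfl), Fin.sum_univ_three] at h1
    omega
  have hS : degreeOf i (P ^ (d 0 + 1) - MvPolynomial.C (ξ ^ (d 0 + 1))) ≤ (d 0 + 1) * k := by
    refine le_trans (degreeOf_sub_le _ _ _) ?_
    rw [max_le_iff]
    constructor
    · exact le_trans (degreeOf_pow_le _ _ _) (Nat.mul_le_mul_left _ hP)
    · rw [degreeOf_C]; exact Nat.zero_le _
  have hQ' : degreeOf i (Q ^ d 1) ≤ d 1 * k :=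
    le_trans (degreeOf_pow_le _ _ _) (Nat.mul_le_mul_left _ hQ)
  have hR' : degreeOf i (R ^ d 2) ≤ d 2 * k :=
    le_trans (degreeOf_pow_le _ _ _) (Nat.mul_le_mul_left _ hR)
  calc degreeOf i (MvPolynomial.C (coeff d f / ((d 0 : ℝ) + 1))
        * (P ^ (d 0 + 1) - MvPolynomial.C (ξ ^ (d 0 + 1))) * Q ^ d 1 * R ^ d 2)
      ≤ degreeOf i (MvPolynomial.C (coeff d f / ((d 0 : ℝ) + 1))
          * (P ^ (d 0 + 1) - MvPolynomial.C (ξ ^ (d 0 + 1))) * Q ^ d 1) + degreeOf i (R ^ d 2) :=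
        degreeOf_mul_le _ _ _
    _ ≤ (degreeOf i (MvPolynomial.C (coeff d f / ((d 0 : ℝ) + 1))
          * (P ^ (d 0 + 1) - MvPolynomial.C (ξ ^ (d 0 + 1)))) + degreeOf i (Q ^ d 1))
          + degreeOf i (R ^ d 2) := by
        exact Nat.add_le_add_right (degreeOf_mul_le _ _ _) _
    _ ≤ ((degreeOf i (MvPolynomial.C (coeff d f / ((d 0 : ℝ) + 1)))
          + degreeOf i (P ^ (d 0 + 1) - MvPolynomial.C (ξ ^ (d 0 + 1)))) + degreeOf i (Q ^ d 1))
          + degreeOf i (R ^ d 2) := by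
        exact Nat.add_le_add_right (Nat.add_le_add_right (degreeOf_mul_le _ _ _) _) _
    _ ≤ ((0 + (d 0 + 1) * k) + d 1 * k) + d 2 * k := by
        refine Nat.add_le_add (Nat.add_le_add (Nat.add_le_add ?_ hS) hQ') hR'
        rw [degreeOf_C]
    _ ≤ (q + 1) * k := by nlinarith

private lemma degJpoly {i : Fin 2} {k : ℕ} (hk : 1 ≤ k) (Q R : MvPolynomial (Fin 2) ℝ)
    (hQ0 : degreeOf 0 Q ≤ k) (hQ1 : degreeOf 1 Q ≤ k)
    (hR0 : degreeOf 0 R ≤ k) (hR1 : degreeOf 1 R ≤ k) :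
    degreeOf i (Jpoly Q R) ≤ 2 * k - 1 := by
  unfold Jpoly
  refine le_trans (degreeOf_sub_le _ _ _) ?_
  rw [max_le_iff]
  have hi : i = 0 ∨ i = 1 := by omega
  constructor <;> refine le_trans (degreeOf_mul_le _ _ _) ?_
  · rcases hi with hi | hi <;> subst hi
    · have h1 := degreeOf_pderiv_le_sub Q 0
      have h2 := degreeOf_pderiv_le_self R 1 0
      omega
    · have h1 := degreeOf_pderiv_le_self Q 0 1
      have h2 := degreeOf_pderiv_le_sub R 1
      omega
  · rcases hi with hi | hi <;> subst hi
    · have h1 := degreeOf_pderiv_le_self Q 1 0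
      have h2 := degreeOf_pderiv_le_sub R 0
      omega
    · have h1 := degreeOf_pderiv_le_sub Q 1
      have h2 := degreeOf_pderiv_le_self R 0 1
      omega

private lemma cell_quad_Phi (q κ m h : ℕ) (hκ : 1 ≤ κ) (ξ : ℝ)
    (f : MvPolynomial (Fin 3) ℝ) (hf : f.totalDegree ≤ q)
    (P Q R : MvPolynomial (Fin 2) ℝ)
    (hP : degreeOf 0 P ≤ κ - 1 ∧ degreeOf 1 P ≤ κ - 1)
    (hQ : degreeOf 0 Q ≤ κ - 1 ∧ degreeOf 1 Q ≤ κ - 1)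
    (hR : degreeOf 0 R ≤ κ - 1 ∧ degreeOf 1 R ≤ κ - 1)
    (h2m : (q + 3) * (κ - 1) ≤ 2 * m) (h2h : (q + 3) * (κ - 1) ≤ 2 * h)
    (lamM wM : Fin m → ℝ) (lamH wH : Fin h → ℝ)
    (hexactM : ∀ P : Polynomial ℝ, P.natDegree < 2 * m →
      ∑ j, wM j * P.eval (lamM j) = ∫ t in (-1 : ℝ)..1, P.eval t)
    (hexactH : ∀ P : Polynomial ℝ, P.natDegree < 2 * h →
      ∑ k, wH k * P.eval (lamH k) = ∫ t in (-1 : ℝ)..1, P.eval t)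
    (ua ub va vb : ℝ) (hun : ua < ub) (hvn : va < vb) :
    ∑ j, ∑ k, wM j * wH k * ((ub - ua) / 2) * ((vb - va) / 2)
        * MvPolynomial.eval ![(ub - ua) / 2 * lamM j + (ub + ua) / 2,
            (vb - va) / 2 * lamH k + (vb + va) / 2] (Phi f ξ P Q R)
      = ∫ a in ua..ub, ∫ b in va..vb, MvPolynomial.eval ![a, b] (Phi f ξ P Q R) := by
  by_cases hκ1 : κ = 1
  · have hzero : Phi f ξ P Q R = 0 := by
      have hQ0 : pderiv 0 Q = 0 :=
        pderiv_eq_zero_of_degreeOf' Q 0 (Nat.le_zero.mp (by simpa [hκ1] using hQ.1))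
      have hR0 : pderiv 0 R = 0 :=
        pderiv_eq_zero_of_degreeOf' R 0 (Nat.le_zero.mp (by simpa [hκ1] using hR.1))
      unfold Phi Jpoly
      rw [hQ0, hR0]
      ring
    simp [hzero]
  · have hk1 : 1 ≤ κ - 1 := by omega
    have hdm : (Phi f ξ P Q R).degreeOf 0 < 2 * m := by
      have h1 : degreeOf 0 (Phi f ξ P Q R)
          ≤ (q + 1) * (κ - 1) + (2 * (κ - 1) - 1) := by
        unfold Phi
        refine le_trans (degreeOf_mul_le _ _ _) ?_
        exact Nat.add_le_add (degApoly ξ hf P Q R hP.1 hQ.1 hR.1)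
          (degJpoly hk1 Q R hQ.1 hQ.2 hR.1 hR.2)
      have e1 : (q + 3) * (κ - 1) = (q + 1) * (κ - 1) + 2 * (κ - 1) := by ring
      omega
    have hdh : (Phi f ξ P Q R).degreeOf 1 < 2 * h := by
      have h1 : degreeOf 1 (Phi f ξ P Q R)
          ≤ (q + 1) * (κ - 1) + (2 * (κ - 1) - 1) := by
        unfold Phi
        refine le_trans (degreeOf_mul_le _ _ _) ?_
        exact Nat.add_le_add (degApoly ξ hf P Q R hP.2 hQ.2 hR.2)
          (degJpoly hk1 Q R hQ.1 hQ.2 hR.1 hR.2)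
      have e1 : (q + 3) * (κ - 1) = (q + 1) * (κ - 1) + 2 * (κ - 1) := by ring
      omega
    exact cell_quad m h lamM wM lamH wH hexactM hexactH _ hdm hdh ua ub va vb hun hvn


/-- **Exactness of the tensor-product Gauss quadrature for Lagrangian flux
integrals (the paper's Lemma 4.1).**

Let `f` be a trivariate polynomial of total degree at most `q`, and
`F(x,y,z) = ∫_ξ^x f(s,y,z) ds`.  Let `S = (Sx, Sy, Sz) : [0,1]² → ℝ³` be a
tensor-product spline surface with knots `0 = u₀ < ⋯ < u_ι = 1`,
`0 = v₀ < ⋯ < v_ι = 1`: on each cell, each component of `S` agrees with a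
bivariate polynomial of degree at most `κ - 1` in each variable (`X`, `Y`, `Z`
below are these polynomial pieces).  Let `(λ^p, ω^p)` (for `p ∈ {n, m, h}`) be
`p`-node quadrature rules on `[-1,1]` with degree of exactness `2p - 1`, with
`n ≥ ⌈(q+1)/2⌉` and `m, h ≥ ⌈(q+3)(κ-1)/2⌉` (stated equivalently as real
inequalities since `n, m, h` are integers).  Then the tensor-product quadrature
sum with the transplanted nodes and weights of the paper computes the surface
flux integral `I_S(f) = ∫_S F dy∧dz = -∫₀¹∫₀¹ F(S(u,v)) J_{yz}(u,v) du dv`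
exactly, where `J_{yz} = ∂(Sy,Sz)/∂(u,v)` (computed cell-wise). -/
theorem lfc_quadrature_exact
    (q κ : ℕ) (hκ : 1 ≤ κ) (ξ : ℝ)
    (f : MvPolynomial (Fin 3) ℝ) (hf : f.totalDegree ≤ q)
    (ι : ℕ) (hι : 1 ≤ ι)
    (u v : Fin (ι + 1) → ℝ)
    (hu : StrictMono u) (hu0 : u 0 = 0) (hu1 : u (Fin.last ι) = 1)
    (hv : StrictMono v) (hv0 : v 0 = 0) (hv1 : v (Fin.last ι) = 1)
    (Sx Sy Sz : ℝ → ℝ → ℝ)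
    (X Y Z : Fin ι → Fin ι → MvPolynomial (Fin 2) ℝ)
    (hXdeg : ∀ l₁ l₂, (X l₁ l₂).degreeOf 0 ≤ κ - 1 ∧ (X l₁ l₂).degreeOf 1 ≤ κ - 1)
    (hYdeg : ∀ l₁ l₂, (Y l₁ l₂).degreeOf 0 ≤ κ - 1 ∧ (Y l₁ l₂).degreeOf 1 ≤ κ - 1)
    (hZdeg : ∀ l₁ l₂, (Z l₁ l₂).degreeOf 0 ≤ κ - 1 ∧ (Z l₁ l₂).degreeOf 1 ≤ κ - 1)
    (hagree : ∀ l₁ l₂ : Fin ι,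
      ∀ a ∈ Set.Icc (u l₁.castSucc) (u l₁.succ),
      ∀ b ∈ Set.Icc (v l₂.castSucc) (v l₂.succ),
        Sx a b = MvPolynomial.eval ![a, b] (X l₁ l₂) ∧
        Sy a b = MvPolynomial.eval ![a, b] (Y l₁ l₂) ∧
        Sz a b = MvPolynomial.eval ![a, b] (Z l₁ l₂))
    (n m h : ℕ)
    (hn : ((q : ℝ) + 1) / 2 ≤ (n : ℝ))
    (hm : ((q : ℝ) + 3) * ((κ : ℝ) - 1) / 2 ≤ (m : ℝ))
    (hh : ((q : ℝ) + 3) * ((κ : ℝ) - 1) / 2 ≤ (h : ℝ))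
    (lamN wN : Fin n → ℝ) (lamM wM : Fin m → ℝ) (lamH wH : Fin h → ℝ)
    (hlamN : ∀ i, lamN i ∈ Set.Icc (-1 : ℝ) 1)
    (hlamM : ∀ j, lamM j ∈ Set.Icc (-1 : ℝ) 1)
    (hlamH : ∀ k, lamH k ∈ Set.Icc (-1 : ℝ) 1)
    (hexactN : ∀ P : Polynomial ℝ, P.natDegree < 2 * n →
      ∑ i, wN i * P.eval (lamN i) = ∫ t in (-1 : ℝ)..1, P.eval t)
    (hexactM : ∀ P : Polynomial ℝ, P.natDegree < 2 * m →
      ∑ j, wM j * P.eval (lamM j) = ∫ t in (-1 : ℝ)..1, P.eval t)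
    (hexactH : ∀ P : Polynomial ℝ, P.natDegree < 2 * h →
      ∑ k, wH k * P.eval (lamH k) = ∫ t in (-1 : ℝ)..1, P.eval t) :
    (∑ l₁ : Fin ι, ∑ l₂ : Fin ι, ∑ i : Fin n, ∑ j : Fin m, ∑ k : Fin h,
      let ua := u l₁.castSucc; let ub := u l₁.succ
      let va := v l₂.castSucc; let vb := v l₂.succ
      let ulj := (ub - ua) / 2 * lamM j + (ub + ua) / 2
      let vlk := (vb - va) / 2 * lamH k + (vb + va) / 2
      let xv := MvPolynomial.eval ![ulj, vlk] (X l₁ l₂)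
      let yv := MvPolynomial.eval ![ulj, vlk] (Y l₁ l₂)
      let zv := MvPolynomial.eval ![ulj, vlk] (Z l₁ l₂)
      let xi := (xv - ξ) / 2 * lamN i + (xv + ξ) / 2
      let Jv := MvPolynomial.eval ![ulj, vlk] (MvPolynomial.pderiv 0 (Y l₁ l₂)) *
                  MvPolynomial.eval ![ulj, vlk] (MvPolynomial.pderiv 1 (Z l₁ l₂)) -
                MvPolynomial.eval ![ulj, vlk] (MvPolynomial.pderiv 1 (Y l₁ l₂)) *
                  MvPolynomial.eval ![ulj, vlk] (MvPolynomial.pderiv 0 (Z l₁ l₂))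
      (-(wN i * wM j * wH k) * ((ub - ua) / 2) * ((vb - va) / 2) *
          ((xv - ξ) / 2) * Jv) *
        MvPolynomial.eval ![xi, yv, zv] f)
    = -∫ a in (0 : ℝ)..1, ∫ b in (0 : ℝ)..1,
        (∫ s in ξ..(Sx a b), MvPolynomial.eval ![s, Sy a b, Sz a b] f) *
          (deriv (fun a' => Sy a' b) a * deriv (fun b' => Sz a b') b -
           deriv (fun b' => Sy a b') b * deriv (fun a' => Sz a' b) a) := by
  classical
  have husucc : ∀ l : Fin ι, u l.castSucc < u l.succ := fun l => hu (Fin.castSucc_lt_succ : l.castSucc < l.succ)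
  have hvsucc : ∀ l : Fin ι, v l.castSucc < v l.succ := fun l => hv (Fin.castSucc_lt_succ : l.castSucc < l.succ)
  -- numeric degree facts
  have hq2n : q < 2 * n := by
    have h2 : ((q + 1 : ℕ) : ℝ) ≤ ((2 * n : ℕ) : ℝ) := by push_cast; linarith
    have h3 := (@Nat.cast_le ℝ _ _ _).mp h2
    omega
  have hcast : (((q + 3) * (κ - 1) : ℕ) : ℝ) = ((q : ℝ) + 3) * ((κ : ℝ) - 1) := by
    push_cast [Nat.cast_sub hκ]
    ring
  have h2m : (q + 3) * (κ - 1) ≤ 2 * m := by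
    have h2 : (((q + 3) * (κ - 1) : ℕ) : ℝ) ≤ ((2 * m : ℕ) : ℝ) := by
      rw [hcast]; push_cast; linarith
    exact_mod_cast h2
  have h2h' : (q + 3) * (κ - 1) ≤ 2 * h := by
    have h2 : (((q + 3) * (κ - 1) : ℕ) : ℝ) ≤ ((2 * h : ℕ) : ℝ) := by
      rw [hcast]; push_cast; linarith
    exact_mod_cast h2
  have cellQ : ∀ l₁ l₂ : Fin ι,
      ∑ j, ∑ k, wM j * wH k * ((u l₁.succ - u l₁.castSucc) / 2) * ((v l₂.succ - v l₂.castSucc) / 2)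
          * MvPolynomial.eval ![(u l₁.succ - u l₁.castSucc) / 2 * lamM j + (u l₁.succ + u l₁.castSucc) / 2,
              (v l₂.succ - v l₂.castSucc) / 2 * lamH k + (v l₂.succ + v l₂.castSucc) / 2]
              (Phi f ξ (X l₁ l₂) (Y l₁ l₂) (Z l₁ l₂))
        = ∫ a in (u l₁.castSucc)..(u l₁.succ), ∫ b in (v l₂.castSucc)..(v l₂.succ),
            MvPolynomial.eval ![a, b] (Phi f ξ (X l₁ l₂) (Y l₁ l₂) (Z l₁ l₂)) :=
    fun l₁ l₂ => cell_quad_Phi q κ m h hκ ξ f hf _ _ _ (hXdeg l₁ l₂) (hYdeg l₁ l₂) (hZdeg l₁ l₂)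
      h2m h2h' lamM wM lamH wH hexactM hexactH _ _ _ _ (husucc l₁) (hvsucc l₂)
  -- pointwise equality on open cells
  have O1 : ∀ (l₁ l₂ : Fin ι) (a : ℝ), a ∈ Set.Ioo (u l₁.castSucc) (u l₁.succ) →
      ∀ b ∈ Set.Ioo (v l₂.castSucc) (v l₂.succ),
      (∫ s in ξ..(Sx a b), MvPolynomial.eval ![s, Sy a b, Sz a b] f) *
          (deriv (fun a' => Sy a' b) a * deriv (fun b' => Sz a b') b -
           deriv (fun b' => Sy a b') b * deriv (fun a' => Sz a' b) a)
        = MvPolynomial.eval ![a, b] (Phi f ξ (X l₁ l₂) (Y l₁ l₂) (Z l₁ l₂)) := by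
    intro l₁ l₂ a ha b hb
    have haI : a ∈ Set.Icc (u l₁.castSucc) (u l₁.succ) := Set.Ioo_subset_Icc_self ha
    have hbI : b ∈ Set.Icc (v l₂.castSucc) (v l₂.succ) := Set.Ioo_subset_Icc_self hb
    obtain ⟨hx, hy, hz⟩ := hagree l₁ l₂ a haI b hbI
    have hya : deriv (fun a' => Sy a' b) a = MvPolynomial.eval ![a, b] (pderiv 0 (Y l₁ l₂)) := by
      have hev : (fun a' => Sy a' b) =ᶠ[nhds a] fun a' => MvPolynomial.eval ![a', b] (Y l₁ l₂) :=
        Filter.eventuallyEq_of_mem (Ioo_mem_nhds ha.1 ha.2)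
          fun a' ha' => (hagree l₁ l₂ a' (Set.Ioo_subset_Icc_self ha') b hbI).2.1
      rw [hev.deriv_eq, deriv_eval_fst]
    have hza : deriv (fun a' => Sz a' b) a = MvPolynomial.eval ![a, b] (pderiv 0 (Z l₁ l₂)) := by
      have hev : (fun a' => Sz a' b) =ᶠ[nhds a] fun a' => MvPolynomial.eval ![a', b] (Z l₁ l₂) :=
        Filter.eventuallyEq_of_mem (Ioo_mem_nhds ha.1 ha.2)
          fun a' ha' => (hagree l₁ l₂ a' (Set.Ioo_subset_Icc_self ha') b hbI).2.2
      rw [hev.deriv_eq, deriv_eval_fst]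
    have hyb : deriv (fun b' => Sy a b') b = MvPolynomial.eval ![a, b] (pderiv 1 (Y l₁ l₂)) := by
      have hev : (fun b' => Sy a b') =ᶠ[nhds b] fun b' => MvPolynomial.eval ![a, b'] (Y l₁ l₂) :=
        Filter.eventuallyEq_of_mem (Ioo_mem_nhds hb.1 hb.2)
          fun b' hb' => (hagree l₁ l₂ a haI b' (Set.Ioo_subset_Icc_self hb')).2.1
      rw [hev.deriv_eq, deriv_eval_snd]
    have hzb : deriv (fun b' => Sz a b') b = MvPolynomial.eval ![a, b] (pderiv 1 (Z l₁ l₂)) := by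
      have hev : (fun b' => Sz a b') =ᶠ[nhds b] fun b' => MvPolynomial.eval ![a, b'] (Z l₁ l₂) :=
        Filter.eventuallyEq_of_mem (Ioo_mem_nhds hb.1 hb.2)
          fun b' hb' => (hagree l₁ l₂ a haI b' (Set.Ioo_subset_Icc_self hb')).2.2
      rw [hev.deriv_eq, deriv_eval_snd]
    rw [hx, hy, hz, hya, hyb, hza, hzb, eval_Phi]
  -- inner splitting
  have O2 : ∀ (l₁ : Fin ι) (a : ℝ), a ∈ Set.Ioo (u l₁.castSucc) (u l₁.succ) →
      (∫ b in (0:ℝ)..1,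
        (∫ s in ξ..(Sx a b), MvPolynomial.eval ![s, Sy a b, Sz a b] f) *
          (deriv (fun a' => Sy a' b) a * deriv (fun b' => Sz a b') b -
           deriv (fun b' => Sy a b') b * deriv (fun a' => Sz a' b) a))
      = ∑ l₂ : Fin ι, ∫ b in (v l₂.castSucc)..(v l₂.succ),
          MvPolynomial.eval ![a, b] (Phi f ξ (X l₁ l₂) (Y l₁ l₂) (Z l₁ l₂)) := by
    intro l₁ a ha
    have hae : ∀ l₂ : Fin ι, ∀ᵐ b : ℝ ∂volume, b ∈ Set.uIoc (v l₂.castSucc) (v l₂.succ) →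
        (∫ s in ξ..(Sx a b), MvPolynomial.eval ![s, Sy a b, Sz a b] f) *
          (deriv (fun a' => Sy a' b) a * deriv (fun b' => Sz a b') b -
           deriv (fun b' => Sy a b') b * deriv (fun a' => Sz a' b) a)
        = MvPolynomial.eval ![a, b] (Phi f ξ (X l₁ l₂) (Y l₁ l₂) (Z l₁ l₂)) := by
      intro l₂
      have hb0 : ∀ᵐ b : ℝ ∂volume, b ≠ v l₂.succ := by
        rw [MeasureTheory.ae_iff]
        have hset : {b : ℝ | ¬ b ≠ v l₂.succ} = {v l₂.succ} := by
          ext x; simp [not_not]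
        rw [hset]
        exact Real.volume_singleton
      filter_upwards [hb0] with b hbne hbmem
      rw [Set.uIoc_of_le (le_of_lt (hvsucc l₂))] at hbmem
      exact O1 l₁ l₂ a ha b ⟨hbmem.1, lt_of_le_of_ne hbmem.2 hbne⟩
    have hint : ∀ l₂ : Fin ι, IntervalIntegrable (fun b =>
        (∫ s in ξ..(Sx a b), MvPolynomial.eval ![s, Sy a b, Sz a b] f) *
          (deriv (fun a' => Sy a' b) a * deriv (fun b' => Sz a b') b -
           deriv (fun b' => Sy a b') b * deriv (fun a' => Sz a' b) a))
        volume (v l₂.castSucc) (v l₂.succ) := by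
      intro l₂
      have hEc : IntervalIntegrable (fun b => MvPolynomial.eval ![a, b]
          (Phi f ξ (X l₁ l₂) (Y l₁ l₂) (Z l₁ l₂))) volume (v l₂.castSucc) (v l₂.succ) :=
        (cont_eval_snd _ a).intervalIntegrable _ _
      refine hEc.congr_ae ((MeasureTheory.ae_restrict_iff' measurableSet_uIoc).2 ?_)
      exact (hae l₂).mono fun b hb hmem => (hb hmem).symm
    set vv : ℕ → ℝ := fun kk => if hkk : kk ≤ ι then v ⟨kk, Nat.lt_succ_of_le hkk⟩ else 1
      with hvv
    have hvvc : ∀ l₂ : Fin ι, vv (l₂ : ℕ) = v l₂.castSucc := by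
      intro l₂
      simp only [hvv]
      rw [dif_pos (le_of_lt l₂.isLt)]
      exact congrArg v (Fin.ext (by simp))
    have hvvs : ∀ l₂ : Fin ι, vv ((l₂ : ℕ) + 1) = v l₂.succ := by
      intro l₂
      simp only [hvv]
      rw [dif_pos (Nat.succ_le_of_lt l₂.isLt)]
      exact congrArg v (Fin.ext (by simp))
    have hvv0 : vv 0 = 0 := by
      simp only [hvv]
      rw [dif_pos (Nat.zero_le ι), Fin.mk_zero, hv0]
    have hvvι : vv ι = 1 := by
      simp only [hvv]
      rw [dif_pos (le_refl ι)]
      rw [← hv1]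
      exact congrArg v (Fin.ext (by simp [Fin.last]))
    have hadj := intervalIntegral.sum_integral_adjacent_intervals (μ := volume) (a := vv)
      (n := ι) (f := fun b =>
        (∫ s in ξ..(Sx a b), MvPolynomial.eval ![s, Sy a b, Sz a b] f) *
          (deriv (fun a' => Sy a' b) a * deriv (fun b' => Sz a b') b -
           deriv (fun b' => Sy a b') b * deriv (fun a' => Sz a' b) a))
      (fun kk hkk => by
        have e1 : vv kk = v (⟨kk, hkk⟩ : Fin ι).castSucc := hvvc ⟨kk, hkk⟩
        have e2 : vv (kk + 1) = v (⟨kk, hkk⟩ : Fin ι).succ := hvvs ⟨kk, hkk⟩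
        rw [e1, e2]
        exact hint ⟨kk, hkk⟩)
    rw [hvv0, hvvι] at hadj
    rw [← hadj, ← Fin.sum_univ_eq_sum_range]
    refine Finset.sum_congr rfl fun l₂ _ => ?_
    rw [hvvc l₂, hvvs l₂]
    exact intervalIntegral.integral_congr_ae (hae l₂)
  -- outer cell integral
  have O3 : ∀ l₁ : Fin ι,
      (∫ a in (u l₁.castSucc)..(u l₁.succ), ∫ b in (0:ℝ)..1,
        (∫ s in ξ..(Sx a b), MvPolynomial.eval ![s, Sy a b, Sz a b] f) *
          (deriv (fun a' => Sy a' b) a * deriv (fun b' => Sz a b') b -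
           deriv (fun b' => Sy a b') b * deriv (fun a' => Sz a' b) a))
      = ∑ l₂ : Fin ι, ∫ a in (u l₁.castSucc)..(u l₁.succ),
          ∫ b in (v l₂.castSucc)..(v l₂.succ),
            MvPolynomial.eval ![a, b] (Phi f ξ (X l₁ l₂) (Y l₁ l₂) (Z l₁ l₂)) := by
    intro l₁
    have ha0 : ∀ᵐ a : ℝ ∂volume, a ≠ u l₁.succ := by
      rw [MeasureTheory.ae_iff]
      have hset : {a : ℝ | ¬ a ≠ u l₁.succ} = {u l₁.succ} := by
        ext x; simp [not_not]
      rw [hset]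
      exact Real.volume_singleton
    have haeA : ∀ᵐ a : ℝ ∂volume, a ∈ Set.uIoc (u l₁.castSucc) (u l₁.succ) →
        (∫ b in (0:ℝ)..1,
          (∫ s in ξ..(Sx a b), MvPolynomial.eval ![s, Sy a b, Sz a b] f) *
            (deriv (fun a' => Sy a' b) a * deriv (fun b' => Sz a b') b -
             deriv (fun b' => Sy a b') b * deriv (fun a' => Sz a' b) a))
        = ∑ l₂ : Fin ι, ∫ b in (v l₂.castSucc)..(v l₂.succ),
            MvPolynomial.eval ![a, b] (Phi f ξ (X l₁ l₂) (Y l₁ l₂) (Z l₁ l₂)) := by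
      filter_upwards [ha0] with a hane hamem
      rw [Set.uIoc_of_le (le_of_lt (husucc l₁))] at hamem
      exact O2 l₁ a ⟨hamem.1, lt_of_le_of_ne hamem.2 hane⟩
    rw [intervalIntegral.integral_congr_ae haeA]
    exact intervalIntegral.integral_finset_sum
      (fun l₂ _ => (cont_param_integral _ _ _).intervalIntegrable _ _)
  have hintA : ∀ l₁ : Fin ι, IntervalIntegrable (fun a => ∫ b in (0:ℝ)..1,
      (∫ s in ξ..(Sx a b), MvPolynomial.eval ![s, Sy a b, Sz a b] f) *
        (deriv (fun a' => Sy a' b) a * deriv (fun b' => Sz a b') b -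
         deriv (fun b' => Sy a b') b * deriv (fun a' => Sz a' b) a))
      volume (u l₁.castSucc) (u l₁.succ) := by
    intro l₁
    have hBc : Continuous (fun a => ∑ l₂ : Fin ι, ∫ b in (v l₂.castSucc)..(v l₂.succ),
        MvPolynomial.eval ![a, b] (Phi f ξ (X l₁ l₂) (Y l₁ l₂) (Z l₁ l₂))) :=
      continuous_finset_sum _ fun l₂ _ => cont_param_integral _ _ _
    have ha0 : ∀ᵐ a : ℝ ∂volume, a ≠ u l₁.succ := by
      rw [MeasureTheory.ae_iff]
      have hset : {a : ℝ | ¬ a ≠ u l₁.succ} = {u l₁.succ} := by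
        ext x; simp [not_not]
      rw [hset]
      exact Real.volume_singleton
    refine (hBc.intervalIntegrable _ _).congr_ae
      ((MeasureTheory.ae_restrict_iff' measurableSet_uIoc).2 ?_)
    filter_upwards [ha0] with a hane hamem
    rw [Set.uIoc_of_le (le_of_lt (husucc l₁))] at hamem
    exact (O2 l₁ a ⟨hamem.1, lt_of_le_of_ne hamem.2 hane⟩).symm
  set uu : ℕ → ℝ := fun kk => if hkk : kk ≤ ι then u ⟨kk, Nat.lt_succ_of_le hkk⟩ else 1
    with huu
  have huuc : ∀ l₁ : Fin ι, uu (l₁ : ℕ) = u l₁.castSucc := by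
    intro l₁
    simp only [huu]
    rw [dif_pos (le_of_lt l₁.isLt)]
    exact congrArg u (Fin.ext (by simp))
  have huus : ∀ l₁ : Fin ι, uu ((l₁ : ℕ) + 1) = u l₁.succ := by
    intro l₁
    simp only [huu]
    rw [dif_pos (Nat.succ_le_of_lt l₁.isLt)]
    exact congrArg u (Fin.ext (by simp))
  have huu0 : uu 0 = 0 := by
    simp only [huu]
    rw [dif_pos (Nat.zero_le ι), Fin.mk_zero, hu0]
  have huuι : uu ι = 1 := by
    simp only [huu]
    rw [dif_pos (le_refl ι)]
    rw [← hu1]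
    exact congrArg u (Fin.ext (by simp [Fin.last]))
  have hadjA := intervalIntegral.sum_integral_adjacent_intervals (μ := volume) (a := uu)
    (n := ι) (f := fun a => ∫ b in (0:ℝ)..1,
      (∫ s in ξ..(Sx a b), MvPolynomial.eval ![s, Sy a b, Sz a b] f) *
        (deriv (fun a' => Sy a' b) a * deriv (fun b' => Sz a b') b -
         deriv (fun b' => Sy a b') b * deriv (fun a' => Sz a' b) a))
    (fun kk hkk => by
      have e1 : uu kk = u (⟨kk, hkk⟩ : Fin ι).castSucc := huuc ⟨kk, hkk⟩
      have e2 : uu (kk + 1) = u (⟨kk, hkk⟩ : Fin ι).succ := huus ⟨kk, hkk⟩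
      rw [e1, e2]
      exact hintA ⟨kk, hkk⟩)
  rw [huu0, huuι] at hadjA
  have hRHS : (∫ a in (0 : ℝ)..1, ∫ b in (0 : ℝ)..1,
        (∫ s in ξ..(Sx a b), MvPolynomial.eval ![s, Sy a b, Sz a b] f) *
          (deriv (fun a' => Sy a' b) a * deriv (fun b' => Sz a b') b -
           deriv (fun b' => Sy a b') b * deriv (fun a' => Sz a' b) a))
      = ∑ l₁ : Fin ι, ∑ l₂ : Fin ι, ∫ a in (u l₁.castSucc)..(u l₁.succ),
          ∫ b in (v l₂.castSucc)..(v l₂.succ),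
            MvPolynomial.eval ![a, b] (Phi f ξ (X l₁ l₂) (Y l₁ l₂) (Z l₁ l₂)) := by
    rw [← hadjA, ← Fin.sum_univ_eq_sum_range]
    refine Finset.sum_congr rfl fun l₁ _ => ?_
    rw [huuc l₁, huus l₁]
    exact O3 l₁
  rw [hRHS]
  dsimp only
  rw [← Finset.sum_neg_distrib]
  refine Finset.sum_congr rfl fun l₁ _ => ?_
  rw [← Finset.sum_neg_distrib]
  refine Finset.sum_congr rfl fun l₂ _ => ?_
  rw [← cellQ l₁ l₂, ← Finset.sum_neg_distrib, Finset.sum_comm]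
  refine Finset.sum_congr rfl fun j _ => ?_
  rw [← Finset.sum_neg_distrib, Finset.sum_comm]
  refine Finset.sum_congr rfl fun k _ => ?_
  rw [eval_Phi, ← xquad n q lamN wN hexactN f hf hq2n ξ
      (MvPolynomial.eval ![(u l₁.succ - u l₁.castSucc) / 2 * lamM j + (u l₁.succ + u l₁.castSucc) / 2,
        (v l₂.succ - v l₂.castSucc) / 2 * lamH k + (v l₂.succ + v l₂.castSucc) / 2] (X l₁ l₂))
      (MvPolynomial.eval ![(u l₁.succ - u l₁.castSucc) / 2 * lamM j + (u l₁.succ + u l₁.castSucc) / 2,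
        (v l₂.succ - v l₂.castSucc) / 2 * lamH k + (v l₂.succ + v l₂.castSucc) / 2] (Y l₁ l₂))
      (MvPolynomial.eval ![(u l₁.succ - u l₁.castSucc) / 2 * lamM j + (u l₁.succ + u l₁.castSucc) / 2,
        (v l₂.succ - v l₂.castSucc) / 2 * lamH k + (v l₂.succ + v l₂.castSucc) / 2] (Z l₁ l₂)),
    Finset.sum_mul, Finset.mul_sum, ← Finset.sum_neg_distrib]
  refine Finset.sum_congr rfl fun i _ => by ring
end
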